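/- arXiv:2602.14645 — 9 statements merged into one kernel-verified Lean document; each statement's English description precedes it below -/
import Mathlib

section
/- In the cyclic-treatment model, fix a strain i and let Y(c) denote its single-strain (isolation) dynamics with μ = μ_i, k = k_i and inoculum X_0 = X_{i0}. If Y(c) → 0 as c → ∞ (strain i goes extinct in isolation), then X_i(t_c^f) → 0 as c → ∞ (strain i goes extinct in competition). -/
open scoped Classical

/-- Extinction indicator: `Ie Xe x = 1` if `x ≥ Xe`, else `0`. -/
noncomputable def Ie (Xe x : ℝ) : ℝ := if Xe ≤ x then 1 else 0

/-- Start-of-cycle concentrations of the cyclic-treatment model: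
`X0 μ k tg tk D Xe Xinit tsat c i` is the concentration `X⁰_{i,c+1}` of strain `i` at
the start of cycle `c+1` (index `0` is the inoculum), where `tsat c` is the saturation
time of cycle `c+1`.  The end-of-cycle concentration `X_i(t_c^f)` of paper cycle
`c ≥ 1` is `X0 … c i`. -/
noncomputable def X0 {n : ℕ} (μ k : Fin n → ℝ) (tg tk D Xe : ℝ)
    (Xinit : Fin n → ℝ) (tsat : ℕ → ℝ) : ℕ → Fin n → ℝ
  | 0 => Xinit
  | c + 1 => fun i =>
      D * X0 μ k tg tk D Xe Xinit tsat c i *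
        Real.exp (μ i *
            (if ∃ j, Xe ≤ X0 μ k tg tk D Xe Xinit tsat c j then min tg (tsat c) else tg) *
            Ie Xe (X0 μ k tg tk D Xe Xinit tsat c i) -
          k i * tk)

/-- Growth duration `t_{c+1}` of cycle `c+1` of the cyclic-treatment model:
`min {t_g, t^sat}` when some strain is above the extinction limit, else `t_g`. -/
noncomputable def tdur {n : ℕ} (μ k : Fin n → ℝ) (tg tk D Xe : ℝ)
    (Xinit : Fin n → ℝ) (tsat : ℕ → ℝ) (c : ℕ) : ℝ :=
  if ∃ j, Xe ≤ X0 μ k tg tk D Xe Xinit tsat c j then min tg (tsat c) else tg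

/-- Equilibrium time `(k t_k − log D)/μ` of a strain with kill rate `kk`, growth rate `m`. -/
noncomputable def teq (kk tk D m : ℝ) : ℝ := (kk * tk - Real.log D) / m

/-- Single-strain (isolation) dynamics `Y(c)`: index `0` is the inoculum `X_0 = Y(1)`,
so `isoY μ k tg tk D Xe K Xinit c` is `Y(c+1)` of the paper. -/
noncomputable def isoY (μ k tg tk D Xe K Xinit : ℝ) : ℕ → ℝ
  | 0 => Xinit
  | c + 1 =>
      D * isoY μ k tg tk D Xe K Xinit c *
        Real.exp (μ *
            (if Xe ≤ isoY μ k tg tk D Xe K Xinit c then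
              min tg ((1 / μ) * Real.log (K / isoY μ k tg tk D Xe K Xinit c))
            else tg) *
            Ie Xe (isoY μ k tg tk D Xe K Xinit c) -
          k * tk)


/-!
Competition can only shorten a strain's growth phase: the saturation time of the mixture is at most
the time the strain alone would need to reach `K`. So one competitive cycle maps `x` to at most
`D e^{-k t_k} g(x)`, where `g` is the isolation growth map, and `g` is monotone because it jumps
upward at the extinction limit. By induction the competitive trajectory stays below the isolated
one, and it is squeezed to `0`.
-/

noncomputable def growthPhase (μ tg Xe K y : ℝ) : ℝ :=
  if Xe ≤ y then min (y * Real.exp (μ * tg)) K else y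

theorem mul_exp_mul_min_log_div {μ y K : ℝ} (tg : ℝ) (hμ : 0 < μ) (hy : 0 < y) (hK : 0 < K) :
    y * Real.exp (μ * min tg ((1 / μ) * Real.log (K / y))) = min (y * Real.exp (μ * tg)) K := by
  have hlog : μ * ((1 / μ) * Real.log (K / y)) = Real.log (K / y) := by field_simp
  rw [mul_min_of_nonneg _ _ hμ.le, hlog, Real.exp_monotone.map_min, mul_min_of_nonneg _ _ hy.le,
    Real.exp_log (div_pos hK hy), mul_div_cancel₀ _ hy.ne']

theorem monotone_growthPhase {μ tg Xe K : ℝ} (hμtg : 0 ≤ μ * tg) (hXe : 0 ≤ Xe) (hXeK : Xe ≤ K) :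
    Monotone (growthPhase μ tg Xe K) := by
  intro y y' hyy'
  have grows : ∀ {z}, 0 ≤ z → z ≤ z * Real.exp (μ * tg) := fun hz =>
    le_mul_of_one_le_right hz (Real.one_le_exp hμtg)
  by_cases hy : Xe ≤ y
  · have hy' : Xe ≤ y' := hy.trans hyy'
    simp only [growthPhase, hy, hy', if_true]
    exact min_le_min_right K (mul_le_mul_of_nonneg_right hyy' (Real.exp_pos _).le)
  by_cases hy' : Xe ≤ y'
  · simp only [growthPhase, hy, hy', if_true, if_false]
    exact le_min (hyy'.trans (grows (hXe.trans hy'))) ((not_le.mp hy).le.trans hXeK)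
  · simpa only [growthPhase, hy, hy', if_false] using hyy'

theorem isoY_succ {μ k tg tk D Xe K Xinit : ℝ} (hμ : 0 < μ) (hXe : 0 < Xe) (hK : 0 < K) (c : ℕ) :
    isoY μ k tg tk D Xe K Xinit (c + 1) =
      D * Real.exp (-(k * tk)) * growthPhase μ tg Xe K (isoY μ k tg tk D Xe K Xinit c) := by
  set y := isoY μ k tg tk D Xe K Xinit c
  show D * y * Real.exp _ = _
  simp only [Ie, growthPhase]
  split_ifs with hy
  · rw [mul_one, sub_eq_add_neg, Real.exp_add, ← mul_exp_mul_min_log_div tg hμ (hXe.trans_le hy) hK]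
    ring
  · rw [mul_zero, zero_sub]
    ring

section Competition

variable {n : ℕ} {μ k : Fin n → ℝ} {tg tk D Xe K : ℝ} {Xinit : Fin n → ℝ} {tsat : ℕ → ℝ}

theorem X0_nonneg (hD0 : 0 ≤ D) (hXinit : ∀ i, 0 ≤ Xinit i) :
    ∀ c i, 0 ≤ X0 μ k tg tk D Xe Xinit tsat c i
  | 0, i => hXinit i
  | c + 1, i => mul_nonneg (mul_nonneg hD0 (X0_nonneg hD0 hXinit c i)) (Real.exp_pos _).le

/-- In competition a strain above the extinction limit grows for at most the saturation time `T`,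
and by the saturation equation it alone cannot exceed `K` within that time. -/
theorem competition_step_le {x : Fin n → ℝ} {T : ℝ} (hμ : ∀ i, 0 < μ i) (hD0 : 0 ≤ D)
    (hx : ∀ j, 0 ≤ x j) (hsat : (∃ j, Xe ≤ x j) → ∑ j, x j * Real.exp (μ j * T * Ie Xe (x j)) = K)
    (i : Fin n) :
    D * x i * Real.exp (μ i * (if ∃ j, Xe ≤ x j then min tg T else tg) * Ie Xe (x i) - k i * tk) ≤
      D * Real.exp (-(k i * tk)) * growthPhase (μ i) tg Xe K (x i) := by
  by_cases hxi : Xe ≤ x i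
  · have hsat_i : x i * Real.exp (μ i * T) ≤ K := by
      have hIe : Ie Xe (x i) = 1 := if_pos hxi
      rw [← hsat ⟨i, hxi⟩, ← mul_one (μ i * T), ← hIe]
      exact Finset.single_le_sum (f := fun j => x j * Real.exp (μ j * T * Ie Xe (x j)))
        (fun j _ => mul_nonneg (hx j) (Real.exp_pos _).le) (Finset.mem_univ i)
    have hgrowth : x i * Real.exp (μ i * min tg T) ≤ min (x i * Real.exp (μ i * tg)) K := by
      rw [mul_min_of_nonneg _ _ (hμ i).le, Real.exp_monotone.map_min, mul_min_of_nonneg _ _ (hx i)]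
      exact min_le_min_left _ hsat_i
    simp only [Ie, growthPhase, hxi, if_true, show ∃ j, Xe ≤ x j from ⟨i, hxi⟩]
    calc D * x i * Real.exp (μ i * min tg T * 1 - k i * tk)
        = D * Real.exp (-(k i * tk)) * (x i * Real.exp (μ i * min tg T)) := by
          rw [mul_one, sub_eq_add_neg, Real.exp_add]; ring
      _ ≤ _ := mul_le_mul_of_nonneg_left hgrowth (mul_nonneg hD0 (Real.exp_pos _).le)
  · simp only [Ie, growthPhase, hxi, if_false, mul_zero, zero_sub]
    exact (mul_right_comm _ _ _).le

theorem X0_succ_le (hμ : ∀ i, 0 < μ i) (hD0 : 0 ≤ D) (hXinit : ∀ i, 0 ≤ Xinit i)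
    (htsat : ∀ c, (∃ j, Xe ≤ X0 μ k tg tk D Xe Xinit tsat c j) →
      ∑ i, X0 μ k tg tk D Xe Xinit tsat c i *
        Real.exp (μ i * tsat c * Ie Xe (X0 μ k tg tk D Xe Xinit tsat c i)) = K)
    (c : ℕ) (i : Fin n) :
    X0 μ k tg tk D Xe Xinit tsat (c + 1) i ≤
      D * Real.exp (-(k i * tk)) * growthPhase (μ i) tg Xe K (X0 μ k tg tk D Xe Xinit tsat c i) :=
  competition_step_le hμ hD0 (X0_nonneg hD0 hXinit c) (htsat c) i

theorem X0_le_isoY (hμ : ∀ i, 0 < μ i) (htg : 0 ≤ tg) (hD0 : 0 ≤ D) (hXe : 0 < Xe)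
    (hXeK : Xe < K) (hXinit : ∀ i, 0 ≤ Xinit i)
    (htsat : ∀ c, (∃ j, Xe ≤ X0 μ k tg tk D Xe Xinit tsat c j) →
      ∑ i, X0 μ k tg tk D Xe Xinit tsat c i *
        Real.exp (μ i * tsat c * Ie Xe (X0 μ k tg tk D Xe Xinit tsat c i)) = K)
    (i : Fin n) :
    ∀ c, X0 μ k tg tk D Xe Xinit tsat c i ≤ isoY (μ i) (k i) tg tk D Xe K (Xinit i) c
  | 0 => le_rfl
  | c + 1 => by
    rw [isoY_succ (hμ i) hXe (hXe.trans hXeK)]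
    have hmono := monotone_growthPhase (mul_nonneg (hμ i).le htg) hXe.le hXeK.le
    exact (X0_succ_le hμ hD0 hXinit htsat c i).trans <| mul_le_mul_of_nonneg_left
      (hmono (X0_le_isoY hμ htg hD0 hXe hXeK hXinit htsat i c))
      (mul_nonneg hD0 (Real.exp_pos _).le)

end Competition

theorem stmt4_general (n : ℕ) (μ k : Fin n → ℝ) (tg tk D Xe K : ℝ)
    (Xinit : Fin n → ℝ) (tsat : ℕ → ℝ)
    (hμ : ∀ i, 0 < μ i) (htg : 0 < tg)
    (hD0 : 0 < D) (hXe : 0 < Xe) (hXeK : Xe < K)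
    (hXinit : ∀ i, 0 ≤ Xinit i)
    (htsat : ∀ c, (∃ j, Xe ≤ X0 μ k tg tk D Xe Xinit tsat c j) →
      ∑ i, X0 μ k tg tk D Xe Xinit tsat c i *
        Real.exp (μ i * tsat c * Ie Xe (X0 μ k tg tk D Xe Xinit tsat c i)) = K)
    (i : Fin n)
    (hiso : Filter.Tendsto (isoY (μ i) (k i) tg tk D Xe K (Xinit i))
      Filter.atTop (nhds 0)) :
    Filter.Tendsto (fun c => X0 μ k tg tk D Xe Xinit tsat c i) Filter.atTop (nhds 0) := by
  exact squeeze_zero (fun c => X0_nonneg hD0.le hXinit c i)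
    (X0_le_isoY hμ htg.le hD0.le hXe hXeK hXinit htsat i) hiso

/-- Lemma 2 of the paper: if strain `i` goes extinct in isolation, it
goes extinct in competition. -/
theorem stmt4 (n : ℕ) (hn : 0 < n) (μ k : Fin n → ℝ) (tg tk D Xe K : ℝ)
    (Xinit : Fin n → ℝ) (tsat : ℕ → ℝ)
    (hμ : ∀ i, 0 < μ i) (hk : ∀ i, 0 ≤ k i) (htg : 0 < tg) (htk : 0 < tk)
    (hD0 : 0 < D) (hD1 : D < 1) (hXe : 0 < Xe) (hXeK : Xe < K)
    (hXinit : ∀ i, 0 ≤ Xinit i) (hsum : ∑ i, Xinit i ≤ K)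
    (htsat : ∀ c, (∃ j, Xe ≤ X0 μ k tg tk D Xe Xinit tsat c j) →
      ∑ i, X0 μ k tg tk D Xe Xinit tsat c i *
        Real.exp (μ i * tsat c * Ie Xe (X0 μ k tg tk D Xe Xinit tsat c i)) = K)
    (i : Fin n)
    (hiso : Filter.Tendsto (isoY (μ i) (k i) tg tk D Xe K (Xinit i))
      Filter.atTop (nhds 0)) :
    Filter.Tendsto (fun c => X0 μ k tg tk D Xe Xinit tsat c i) Filter.atTop (nhds 0) :=
  stmt4_general n μ k tg tk D Xe K Xinit tsat hμ htg hD0 hXe hXeK hXinit htsat i hiso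
end

section
/- Consider the abstract cycle recursion for one strain with arbitrary real growth durations s_c. Then X(c) → 0 as c → ∞ if and only if X(1) < X_e, or there exists a cycle c ≥ 1 such that X(c+1) < X_e ≤ X(c). -/
open scoped Classical

/-- Lemma 3 of the paper: in the abstract one-strain cycle recursion
(index `0` is the inoculum `X(1)`, so `X c` here is `X(c+1)` of the paper),
extinction holds iff the inoculum is below the extinction limit or the concentration
crosses below the extinction limit at the end of some cycle. -/
theorem stmt5 (μ k tk D Xe : ℝ) (hμ : 0 < μ) (hk : 0 ≤ k) (htk : 0 < tk)
    (hD0 : 0 < D) (hD1 : D < 1) (hXe : 0 < Xe) (s : ℕ → ℝ) (X : ℕ → ℝ)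
    (hX0 : 0 ≤ X 0)
    (hrec : ∀ c, X (c + 1) = D * X c * Real.exp (μ * s c * Ie Xe (X c) - k * tk)) :
    Filter.Tendsto X Filter.atTop (nhds 0) ↔
      X 0 < Xe ∨ ∃ c, X (c + 1) < Xe ∧ Xe ≤ X c := by
  have hXnn : ∀ c, 0 ≤ X c := by
    intro c
    induction c with
    | zero => exact hX0
    | succ n ih =>
      rw [hrec]
      positivity
  constructor
  · intro hT
    by_contra hcon
    push_neg at hcon
    obtain ⟨h0, h1⟩ := hcon
    have hall : ∀ n, Xe ≤ X n := by
      intro n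
      induction n with
      | zero => exact h0
      | succ m ih =>
        by_contra h
        push_neg at h
        exact absurd ih (not_le.mpr (h1 m h))
    obtain ⟨N, hN⟩ := (hT.eventually (gt_mem_nhds hXe)).exists
    exact absurd (hall N) (not_le.mpr hN)
  · intro h
    obtain ⟨N, hN⟩ : ∃ N, X N < Xe := by
      rcases h with h0 | ⟨c, hc1, _⟩
      · exact ⟨0, h0⟩
      · exact ⟨c + 1, hc1⟩
    have key : ∀ j, X (N + j) < Xe ∧ X (N + j) ≤ D ^ j * X N := by
      intro j
      induction j with
      | zero => exact ⟨hN, by simp⟩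
      | succ m ih =>
        obtain ⟨hlt, hle⟩ := ih
        have hIe : Ie Xe (X (N + m)) = 0 := by
          simp [Ie, not_le.mpr hlt]
        have hrec' : X (N + (m + 1)) =
            D * X (N + m) * Real.exp (-(k * tk)) := by
          have := hrec (N + m)
          rw [hIe] at this
          simpa [add_assoc] using this
        have hexp : Real.exp (-(k * tk)) ≤ 1 := by
          apply Real.exp_le_one_iff.mpr
          nlinarith
        have hstep : X (N + (m + 1)) ≤ D * X (N + m) := by
          rw [hrec']
          nlinarith [mul_nonneg hD0.le (hXnn (N + m)), Real.exp_pos (-(k * tk))]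
        constructor
        · calc X (N + (m + 1)) ≤ D * X (N + m) := hstep
            _ ≤ 1 * X (N + m) := by nlinarith [hXnn (N + m)]
            _ = X (N + m) := one_mul _
            _ < Xe := hlt
        · calc X (N + (m + 1)) ≤ D * X (N + m) := hstep
            _ ≤ D * (D ^ m * X N) := by nlinarith
            _ = D ^ (m + 1) * X N := by ring
    have hg : Filter.Tendsto (fun j => D ^ j * X N) Filter.atTop (nhds 0) := by
      have := (tendsto_pow_atTop_nhds_zero_of_lt_one hD0.le hD1).mul_const (X N)
      simpa using this
    have htail : Filter.Tendsto (fun j => X (j + N)) Filter.atTop (nhds 0) := by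
      refine squeeze_zero (fun j => hXnn (j + N)) (fun j => ?_) hg
      have := (key j).2
      simpa [add_comm] using this
    exact (Filter.tendsto_add_atTop_iff_nat N).mp htail
end

section
/- In the cyclic-treatment model, the total population goes extinct (i.e., X_i(t_c^f) → 0 as c → ∞ for every strain i = 1,…,n) if and only if J = ∅, where J = { j : X_e ≤ X_{j0} and t_eq,j ≤ min{ t_g , t_1 − (1/μ_j) · log(X_e / X_{j0}) } }. -/
open scoped Classical

/-- The set `J` of Propositions 1 and 2 of the paper (here `tdur … 0` is `t_1`). -/
noncomputable def Jset {n : ℕ} (μ k : Fin n → ℝ) (tg tk D Xe : ℝ)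
    (Xinit : Fin n → ℝ) (tsat : ℕ → ℝ) : Set (Fin n) :=
  {j | Xe ≤ Xinit j ∧
    teq (k j) tk D (μ j) ≤
      min tg (tdur μ k tg tk D Xe Xinit tsat 0 - (1 / μ j) * Real.log (Xe / Xinit j))}

private lemma aux_geom (f : ℕ → ℝ) (q : ℝ) (hq0 : 0 ≤ q) (hq1 : q < 1)
    (hf0 : ∀ c, 0 ≤ f c) (hstep : ∀ c, f (c + 1) ≤ q * f c) :
    Filter.Tendsto f Filter.atTop (nhds 0) := by
  have hbound : ∀ c, f c ≤ q ^ c * f 0 := by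
    intro c
    induction c with
    | zero => simp
    | succ c ih =>
      calc f (c + 1) ≤ q * f c := hstep c
        _ ≤ q * (q ^ c * f 0) := mul_le_mul_of_nonneg_left ih hq0
        _ = q ^ (c + 1) * f 0 := by ring
  have h1 : Filter.Tendsto (fun c : ℕ => q ^ c * f 0) Filter.atTop (nhds 0) := by
    simpa using (tendsto_pow_atTop_nhds_zero_of_lt_one hq0 hq1).mul_const (f 0)
  exact squeeze_zero hf0 hbound h1

private lemma teq_pos (kk tkk DD m : ℝ) (hk : 0 ≤ kk) (htk : 0 < tkk)
    (hD0 : 0 < DD) (hD1 : DD < 1) (hm : 0 < m) : 0 < teq kk tkk DD m := by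
  unfold teq
  apply div_pos _ hm
  nlinarith [Real.log_neg hD0 hD1, mul_nonneg hk htk.le]

private lemma grow_eq (kk tkk DD m t x Xe : ℝ) (hm : m ≠ 0) (hD : 0 < DD) (h : Xe ≤ x) :
    DD * x * Real.exp (m * t * Ie Xe x - kk * tkk)
      = x * Real.exp (m * (t - teq kk tkk DD m)) := by
  rw [Ie, if_pos h, mul_one]
  have h1 : m * teq kk tkk DD m = kk * tkk - Real.log DD := by
    unfold teq; field_simp
  rw [mul_sub, h1, show m * t - (kk * tkk - Real.log DD)
      = Real.log DD + (m * t - kk * tkk) by ring, Real.exp_add, Real.exp_log hD]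
  ring

private lemma below_step (kk tkk DD m t x Xe : ℝ) (hD0 : 0 < DD) (hk : 0 ≤ kk)
    (htk : 0 ≤ tkk) (hx : 0 ≤ x) (h : x < Xe) :
    DD * x * Real.exp (m * t * Ie Xe x - kk * tkk) ≤ DD * x := by
  rw [Ie, if_neg (not_le.2 h), mul_zero, zero_sub]
  have h1 : Real.exp (-(kk * tkk)) ≤ 1 := by
    rw [show (1:ℝ) = Real.exp 0 by simp]
    exact Real.exp_le_exp.2 (by nlinarith)
  nlinarith [mul_nonneg hD0.le hx]

private lemma nonext {n : ℕ} {μ k : Fin n → ℝ} {tg tk D Xe K : ℝ} {tsat : ℕ → ℝ}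
    {X : ℕ → Fin n → ℝ} {τ : ℕ → ℝ}
    (hμ : ∀ i, 0 < μ i) (hk : ∀ i, 0 ≤ k i) (htk : 0 < tk)
    (hD0 : 0 < D) (hD1 : D < 1) (hXe : 0 < Xe)
    (hXnn0 : ∀ i, 0 ≤ X 0 i)
    (hX : ∀ c i, X (c+1) i = D * X c i * Real.exp (μ i * τ c * Ie Xe (X c i) - k i * tk))
    (hτ : ∀ c, τ c = if ∃ j, Xe ≤ X c j then min tg (tsat c) else tg)
    (htsat : ∀ c, (∃ j, Xe ≤ X c j) →
      ∑ i, X c i * Real.exp (μ i * tsat c * Ie Xe (X c i)) = K)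
    (j : Fin n) (hjtg : teq (k j) tk D (μ j) ≤ tg)
    (hj1 : Xe ≤ X 1 j) :
    ∃ i, ∀ c, Xe ≤ X (c + 1) i := by
  have hXnn : ∀ c i, 0 ≤ X c i := by
    intro c
    induction c with
    | zero => exact hXnn0
    | succ c ih =>
      intro i
      rw [hX]
      exact mul_nonneg (mul_nonneg hD0.le (ih i)) (Real.exp_pos _).le
  have hGmono : ∀ c i, Xe ≤ X (c+1) i → Xe ≤ X c i := by
    intro c i h
    by_contra hc
    push_neg at hc
    have h2 := below_step (k i) tk D (μ i) (τ c) (X c i) Xe hD0 (hk i) htk.le (hXnn c i) hc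
    rw [← hX c i] at h2
    nlinarith [mul_pos hD0 (sub_pos.2 hc)]
  obtain ⟨i0, hi0mem, hi0min⟩ := Finset.exists_min_image
    (Finset.univ.filter fun i => Xe ≤ X 1 i) (fun i => teq (k i) tk D (μ i))
    ⟨j, by simp [hj1]⟩
  simp only [Finset.mem_filter, Finset.mem_univ, true_and] at hi0mem
  have hmin1 : ∀ i, Xe ≤ X 1 i → teq (k i0) tk D (μ i0) ≤ teq (k i) tk D (μ i) :=
    fun i hi => hi0min i (by simp [hi])
  have hi0tg : teq (k i0) tk D (μ i0) ≤ tg := le_trans (hmin1 j hj1) hjtg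
  have hi00 : Xe ≤ X 0 i0 := hGmono 0 i0 hi0mem
  -- core lemma
  have hL : ∀ c, Xe ≤ X c i0 → Xe ≤ X (c+1) i0 →
      (∀ i, Xe ≤ X (c+1) i → teq (k i0) tk D (μ i0) ≤ teq (k i) tk D (μ i)) →
      teq (k i0) tk D (μ i0) ≤ tsat (c+1) := by
    intro c h0 h1 hmin
    by_contra hcon
    push_neg at hcon
    have hKc := htsat c ⟨i0, h0⟩
    have hK1 := htsat (c+1) ⟨i0, h1⟩
    have hτc : τ c ≤ tsat c := by
      rw [hτ c, if_pos ⟨i0, h0⟩]; exact min_le_right _ _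
    have hfle : ∑ i, X (c+1) i *
        Real.exp (μ i * teq (k i0) tk D (μ i0) * Ie Xe (X (c+1) i)) ≤ K := by
      rw [← hKc]
      apply Finset.sum_le_sum
      intro i _
      by_cases hi : Xe ≤ X (c+1) i
      · have hci : Xe ≤ X c i := hGmono c i hi
        rw [Ie, if_pos hi, mul_one, Ie, if_pos hci, mul_one,
          hX c i, grow_eq (k i) tk D (μ i) (τ c) (X c i) Xe (hμ i).ne' hD0 hci,
          mul_assoc, ← Real.exp_add]
        apply mul_le_mul_of_nonneg_left (Real.exp_le_exp.2 ?_) (hXnn c i)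
        have h2 : τ c - teq (k i) tk D (μ i) + teq (k i0) tk D (μ i0) ≤ tsat c := by
          have := hmin i hi; linarith
        nlinarith [hμ i]
      · push_neg at hi
        rw [Ie, if_neg (not_le.2 hi), mul_zero, Real.exp_zero, mul_one]
        by_cases hci : Xe ≤ X c i
        · rw [Ie, if_pos hci, mul_one, hX c i,
            grow_eq (k i) tk D (μ i) (τ c) (X c i) Xe (hμ i).ne' hD0 hci]
          apply mul_le_mul_of_nonneg_left (Real.exp_le_exp.2 ?_) (hXnn c i)
          have hp := teq_pos (k i) tk D (μ i) (hk i) htk hD0 hD1 (hμ i)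
          nlinarith [hμ i]
        · push_neg at hci
          rw [Ie, if_neg (not_le.2 hci), mul_zero, Real.exp_zero, mul_one]
          have h2 := below_step (k i) tk D (μ i) (τ c) (X c i) Xe hD0 (hk i) htk.le
            (hXnn c i) hci
          rw [← hX c i] at h2
          nlinarith [hXnn c i]
    have hstrict : ∑ i, X (c+1) i *
        Real.exp (μ i * tsat (c+1) * Ie Xe (X (c+1) i))
        < ∑ i, X (c+1) i * Real.exp (μ i * teq (k i0) tk D (μ i0) * Ie Xe (X (c+1) i)) := by
      apply Finset.sum_lt_sum
      · intro i _
        by_cases hi : Xe ≤ X (c+1) i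
        · rw [Ie, if_pos hi, mul_one, mul_one]
          exact mul_le_mul_of_nonneg_left
            (Real.exp_le_exp.2 (mul_le_mul_of_nonneg_left hcon.le (hμ i).le)) (hXnn (c+1) i)
        · push_neg at hi
          rw [Ie, if_neg (not_le.2 hi), mul_zero, mul_zero]
      · refine ⟨i0, Finset.mem_univ _, ?_⟩
        rw [Ie, if_pos h1, mul_one, mul_one]
        exact mul_lt_mul_of_pos_left
          (Real.exp_lt_exp.2 (by nlinarith [hμ i0])) (lt_of_lt_of_le hXe h1)
    rw [hK1] at hstrict
    linarith
  -- main induction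
  have hQ : ∀ c, Xe ≤ X (c+1) i0 ∧
      (∀ i, Xe ≤ X (c+1) i → teq (k i0) tk D (μ i0) ≤ teq (k i) tk D (μ i)) ∧
      teq (k i0) tk D (μ i0) ≤ tsat (c+1) := by
    intro c
    induction c with
    | zero => exact ⟨hi0mem, hmin1, hL 0 hi00 hi0mem hmin1⟩
    | succ c ih =>
      obtain ⟨ha, hb, hc2⟩ := ih
      have hτ1 : teq (k i0) tk D (μ i0) ≤ τ (c+1) := by
        rw [hτ (c+1), if_pos ⟨i0, ha⟩]
        exact le_min hi0tg hc2
      have ha' : Xe ≤ X (c+1+1) i0 := by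
        rw [hX (c+1) i0,
          grow_eq (k i0) tk D (μ i0) (τ (c+1)) (X (c+1) i0) Xe (hμ i0).ne' hD0 ha]
        have h1 : (1:ℝ) ≤ Real.exp (μ i0 * (τ (c+1) - teq (k i0) tk D (μ i0))) := by
          rw [show (1:ℝ) = Real.exp 0 by simp]
          exact Real.exp_le_exp.2 (by nlinarith [hμ i0])
        nlinarith [lt_of_lt_of_le hXe ha]
      have hb' : ∀ i, Xe ≤ X (c+1+1) i → teq (k i0) tk D (μ i0) ≤ teq (k i) tk D (μ i) :=
        fun i hi => hb i (hGmono (c+1) i hi)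
      exact ⟨ha', hb', hL (c+1) ha ha' hb'⟩
  exact ⟨i0, fun c => (hQ c).1⟩

/-- Proposition 1, part 2 of the paper: the total population goes
extinct iff `J = ∅`. -/
theorem stmt7 (n : ℕ) (hn : 0 < n) (μ k : Fin n → ℝ) (tg tk D Xe K : ℝ)
    (Xinit : Fin n → ℝ) (tsat : ℕ → ℝ)
    (hμ : ∀ i, 0 < μ i) (hk : ∀ i, 0 ≤ k i) (htg : 0 < tg) (htk : 0 < tk)
    (hD0 : 0 < D) (hD1 : D < 1) (hXe : 0 < Xe) (hXeK : Xe < K)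
    (hXinit : ∀ i, 0 ≤ Xinit i) (hsum : ∑ i, Xinit i ≤ K)
    (htsat : ∀ c, (∃ j, Xe ≤ X0 μ k tg tk D Xe Xinit tsat c j) →
      ∑ i, X0 μ k tg tk D Xe Xinit tsat c i *
        Real.exp (μ i * tsat c * Ie Xe (X0 μ k tg tk D Xe Xinit tsat c i)) = K) :
    (∀ i, Filter.Tendsto (fun c => X0 μ k tg tk D Xe Xinit tsat c i) Filter.atTop (nhds 0)) ↔
      Jset μ k tg tk D Xe Xinit tsat = ∅ := by
  have hXsucc : ∀ c i, X0 μ k tg tk D Xe Xinit tsat (c+1) i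
      = D * X0 μ k tg tk D Xe Xinit tsat c i *
        Real.exp (μ i * tdur μ k tg tk D Xe Xinit tsat c *
          Ie Xe (X0 μ k tg tk D Xe Xinit tsat c i) - k i * tk) := fun c i => rfl
  have hτdef : ∀ c, tdur μ k tg tk D Xe Xinit tsat c
      = if ∃ j, Xe ≤ X0 μ k tg tk D Xe Xinit tsat c j then min tg (tsat c) else tg :=
    fun c => rfl
  have hτtg : ∀ c, tdur μ k tg tk D Xe Xinit tsat c ≤ tg := by
    intro c
    rw [hτdef c]
    split
    · exact min_le_left _ _
    · exact le_rfl
  have hXnn : ∀ c i, 0 ≤ X0 μ k tg tk D Xe Xinit tsat c i := by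
    intro c
    induction c with
    | zero => exact hXinit
    | succ c ih =>
      intro i
      rw [hXsucc]
      exact mul_nonneg (mul_nonneg hD0.le (ih i)) (Real.exp_pos _).le
  constructor
  · -- extinction → J = ∅
    intro hext
    by_contra hne
    rw [Set.eq_empty_iff_forall_notMem] at hne
    push_neg at hne
    obtain ⟨j, hj⟩ := hne
    rw [Jset, Set.mem_setOf_eq] at hj
    obtain ⟨hj0, hj2⟩ := hj
    have hjtg : teq (k j) tk D (μ j) ≤ tg := le_trans hj2 (min_le_left _ _)
    have hj0' : Xe ≤ X0 μ k tg tk D Xe Xinit tsat 0 j := hj0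
    have hXjpos : 0 < Xinit j := lt_of_lt_of_le hXe hj0
    have hj1 : Xe ≤ X0 μ k tg tk D Xe Xinit tsat 1 j := by
      have e1 : X0 μ k tg tk D Xe Xinit tsat 1 j
          = Xinit j * Real.exp (μ j *
            (tdur μ k tg tk D Xe Xinit tsat 0 - teq (k j) tk D (μ j))) := by
        rw [show X0 μ k tg tk D Xe Xinit tsat 1 j
            = D * X0 μ k tg tk D Xe Xinit tsat 0 j *
              Real.exp (μ j * tdur μ k tg tk D Xe Xinit tsat 0 *
                Ie Xe (X0 μ k tg tk D Xe Xinit tsat 0 j) - k j * tk) from hXsucc 0 j]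
        exact grow_eq (k j) tk D (μ j) _ _ Xe (hμ j).ne' hD0 hj0'
      rw [e1]
      have h2 : teq (k j) tk D (μ j) ≤ tdur μ k tg tk D Xe Xinit tsat 0
          - (1 / μ j) * Real.log (Xe / Xinit j) := le_trans hj2 (min_le_right _ _)
      have h4 : μ j * (1 / μ j * Real.log (Xe / Xinit j)) = Real.log (Xe / Xinit j) := by
        rw [← mul_assoc, mul_one_div, div_self (hμ j).ne', one_mul]
      have h3 : Real.log (Xe / Xinit j)
          ≤ μ j * (tdur μ k tg tk D Xe Xinit tsat 0 - teq (k j) tk D (μ j)) := by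
        have h5 := mul_le_mul_of_nonneg_left h2 (hμ j).le
        rw [mul_sub, h4] at h5
        have h6 := mul_sub (μ j) (tdur μ k tg tk D Xe Xinit tsat 0) (teq (k j) tk D (μ j))
        linarith
      calc Xe = Xinit j * (Xe / Xinit j) := by field_simp
        _ = Xinit j * Real.exp (Real.log (Xe / Xinit j)) := by
            rw [Real.exp_log (div_pos hXe hXjpos)]
        _ ≤ _ := mul_le_mul_of_nonneg_left (Real.exp_le_exp.2 h3) hXjpos.le
    obtain ⟨i0, hi0⟩ := nonext hμ hk htk hD0 hD1 hXe hXinit hXsucc hτdef htsat j hjtg hj1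
    have hev : ∀ᶠ c in Filter.atTop, X0 μ k tg tk D Xe Xinit tsat c i0 < Xe :=
      (hext i0).eventually_lt_const hXe
    obtain ⟨N, hN⟩ := Filter.eventually_atTop.1 hev
    exact absurd (hi0 N) (not_le.2 (hN (N+1) (by omega)))
  · -- J = ∅ → extinction
    intro hJ i
    have hnot : i ∉ Jset μ k tg tk D Xe Xinit tsat := by
      rw [hJ]; exact Set.notMem_empty i
    rw [Jset, Set.mem_setOf_eq] at hnot
    push_neg at hnot
    by_cases h0 : Xe ≤ Xinit i
    · have h1 := hnot h0
      rcases min_lt_iff.1 h1 with htg' | hA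
      · -- tg < teq i : geometric decay with q
        set q := max D (Real.exp (μ i * (tg - teq (k i) tk D (μ i)))) with hq
        have hq0 : 0 ≤ q := le_trans hD0.le (le_max_left _ _)
        have hq1 : q < 1 := by
          apply max_lt hD1
          rw [show (1:ℝ) = Real.exp 0 by simp]
          exact Real.exp_lt_exp.2 (by nlinarith [hμ i])
        apply aux_geom _ q hq0 hq1 (fun c => hXnn c i)
        intro c
        by_cases hc : Xe ≤ X0 μ k tg tk D Xe Xinit tsat c i
        · rw [hXsucc c i, grow_eq (k i) tk D (μ i) _ _ Xe (hμ i).ne' hD0 hc]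
          have he : Real.exp (μ i * (tdur μ k tg tk D Xe Xinit tsat c
              - teq (k i) tk D (μ i))) ≤ q := by
            apply le_trans _ (le_max_right D _)
            apply Real.exp_le_exp.2
            have := hτtg c
            nlinarith [hμ i]
          calc X0 μ k tg tk D Xe Xinit tsat c i * Real.exp (μ i *
                (tdur μ k tg tk D Xe Xinit tsat c - teq (k i) tk D (μ i)))
              ≤ X0 μ k tg tk D Xe Xinit tsat c i * q :=
                mul_le_mul_of_nonneg_left he (hXnn c i)
            _ = q * X0 μ k tg tk D Xe Xinit tsat c i := mul_comm _ _
        · push_neg at hc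
          have h2 := below_step (k i) tk D (μ i)
            (tdur μ k tg tk D Xe Xinit tsat c) (X0 μ k tg tk D Xe Xinit tsat c i) Xe hD0
            (hk i) htk.le (hXnn c i) hc
          rw [← hXsucc c i] at h2
          calc X0 μ k tg tk D Xe Xinit tsat (c+1) i
              ≤ D * X0 μ k tg tk D Xe Xinit tsat c i := h2
            _ ≤ q * X0 μ k tg tk D Xe Xinit tsat c i :=
                mul_le_mul_of_nonneg_right (le_max_left _ _) (hXnn c i)
      · -- X 1 i < Xe
        have h1lt : X0 μ k tg tk D Xe Xinit tsat 1 i < Xe := by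
          have e1 : X0 μ k tg tk D Xe Xinit tsat 1 i
              = Xinit i * Real.exp (μ i *
                (tdur μ k tg tk D Xe Xinit tsat 0 - teq (k i) tk D (μ i))) := by
            rw [show X0 μ k tg tk D Xe Xinit tsat 1 i
                = D * X0 μ k tg tk D Xe Xinit tsat 0 i *
                  Real.exp (μ i * tdur μ k tg tk D Xe Xinit tsat 0 *
                    Ie Xe (X0 μ k tg tk D Xe Xinit tsat 0 i) - k i * tk) from hXsucc 0 i]
            exact grow_eq (k i) tk D (μ i) _ _ Xe (hμ i).ne' hD0 h0
          rw [e1]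
          have hXipos : 0 < Xinit i := lt_of_lt_of_le hXe h0
          have h4 : μ i * (1 / μ i * Real.log (Xe / Xinit i)) = Real.log (Xe / Xinit i) := by
            rw [← mul_assoc, mul_one_div, div_self (hμ i).ne', one_mul]
          have h3 : μ i * (tdur μ k tg tk D Xe Xinit tsat 0 - teq (k i) tk D (μ i))
              < Real.log (Xe / Xinit i) := by
            have h5 := mul_lt_mul_of_pos_left hA (hμ i)
            rw [mul_sub, h4] at h5
            have h6 := mul_sub (μ i) (tdur μ k tg tk D Xe Xinit tsat 0) (teq (k i) tk D (μ i))
            linarith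
          calc Xinit i * Real.exp (μ i *
                (tdur μ k tg tk D Xe Xinit tsat 0 - teq (k i) tk D (μ i)))
              < Xinit i * Real.exp (Real.log (Xe / Xinit i)) :=
                mul_lt_mul_of_pos_left (Real.exp_lt_exp.2 h3) hXipos
            _ = Xinit i * (Xe / Xinit i) := by rw [Real.exp_log (div_pos hXe hXipos)]
            _ = Xe := by field_simp
        have hlt : ∀ m, X0 μ k tg tk D Xe Xinit tsat (m+1) i < Xe := by
          intro m
          induction m with
          | zero => exact h1lt
          | succ m ih =>
            have h2 := below_step (k i) tk D (μ i)
              (tdur μ k tg tk D Xe Xinit tsat (m+1)) (X0 μ k tg tk D Xe Xinit tsat (m+1) i)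
              Xe hD0 (hk i) htk.le (hXnn (m+1) i) ih
            rw [← hXsucc (m+1) i] at h2
            nlinarith [hXnn (m+1) i, mul_pos hD0 hXe]
        rw [← Filter.tendsto_add_atTop_iff_nat 1]
        apply aux_geom (fun m => X0 μ k tg tk D Xe Xinit tsat (m+1) i) D hD0.le hD1
          (fun c => hXnn (c+1) i)
        intro c
        have h2 := below_step (k i) tk D (μ i)
          (tdur μ k tg tk D Xe Xinit tsat (c+1)) (X0 μ k tg tk D Xe Xinit tsat (c+1) i)
          Xe hD0 (hk i) htk.le (hXnn (c+1) i) (hlt c)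
        rw [← hXsucc (c+1) i] at h2
        exact h2
    · -- Xinit i < Xe
      push_neg at h0
      have hlt : ∀ m, X0 μ k tg tk D Xe Xinit tsat m i < Xe := by
        intro m
        induction m with
        | zero => exact h0
        | succ m ih =>
          have h2 := below_step (k i) tk D (μ i)
            (tdur μ k tg tk D Xe Xinit tsat m) (X0 μ k tg tk D Xe Xinit tsat m i)
            Xe hD0 (hk i) htk.le (hXnn m i) ih
          rw [← hXsucc m i] at h2
          nlinarith [hXnn m i]
      apply aux_geom _ D hD0.le hD1 (fun c => hXnn c i)
      intro c
      have h2 := below_step (k i) tk D (μ i)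
        (tdur μ k tg tk D Xe Xinit tsat c) (X0 μ k tg tk D Xe Xinit tsat c i)
        Xe hD0 (hk i) htk.le (hXnn c i) (hlt c)
      rw [← hXsucc c i] at h2
      exact h2
end

section
/- Consider the abstract cycle recursion for one strain with arbitrary real growth durations s_c. If X(c) converges to a positive limit as c → ∞, then X(c) ≥ X_e for every c ≥ 1. -/
/-!
Below the extinction limit the growth term vanishes, so one cycle multiplies the strain by
`D * exp (-k tk) < 1`. Hence once the strain drops below the limit it stays there and decays
geometrically to `0`, which is incompatible with a positive limit.
-/

open scoped Classical

open Filter Topology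

section BelowThreshold

variable {x : ℕ → ℝ} {r a : ℝ}

theorem lt_of_lt_of_step (hr0 : 0 ≤ r) (hr1 : r ≤ 1) (ha : 0 < a)
    (hstep : ∀ n, x n < a → x (n + 1) = r * x n) {c : ℕ} (hc : x c < a) :
    ∀ n, c ≤ n → x n < a := by
  intro n hn
  induction n, hn using Nat.le_induction with
  | base => exact hc
  | succ n _ ih =>
    rw [hstep n ih]
    -- `r * x n` lies between `x n` and `0`, both below `a`
    rcases le_total 0 (x n) with hx | hx <;> nlinarith

theorem eq_pow_mul_of_step (hr0 : 0 ≤ r) (hr1 : r ≤ 1) (ha : 0 < a)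
    (hstep : ∀ n, x n < a → x (n + 1) = r * x n) {c : ℕ} (hc : x c < a) (n : ℕ) :
    x (n + c) = r ^ n * x c := by
  induction n with
  | zero => simp
  | succ n ih =>
    have hlt := lt_of_lt_of_step hr0 hr1 ha hstep hc (n + c) (Nat.le_add_left c n)
    rw [Nat.add_right_comm, hstep _ hlt, ih, pow_succ]
    ring

theorem tendsto_zero_of_lt_of_step (hr0 : 0 ≤ r) (hr1 : r < 1) (ha : 0 < a)
    (hstep : ∀ n, x n < a → x (n + 1) = r * x n) {c : ℕ} (hc : x c < a) :
    Tendsto x atTop (𝓝 0) := by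
  rw [← tendsto_add_atTop_iff_nat c]
  simp_rw [eq_pow_mul_of_step hr0 hr1.le ha hstep hc]
  simpa using (tendsto_pow_atTop_nhds_zero_of_lt_one hr0 hr1).mul_const (x c)

end BelowThreshold

theorem Ie_eq_zero_of_lt {Xe x : ℝ} (hx : x < Xe) : Ie Xe x = 0 :=
  if_neg hx.not_ge

theorem stmt8_general (μ k tk D Xe : ℝ) (hk : 0 ≤ k) (htk : 0 < tk)
    (hD0 : 0 < D) (hD1 : D < 1) (hXe : 0 < Xe) (s : ℕ → ℝ) (X : ℕ → ℝ)
    (hrec : ∀ c, X (c + 1) = D * X c * Real.exp (μ * s c * Ie Xe (X c) - k * tk))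
    (L : ℝ) (hL : 0 < L) (h : Filter.Tendsto X Filter.atTop (nhds L)) :
    ∀ c, Xe ≤ X c := by
  set r := D * Real.exp (-(k * tk))
  have hr0 : 0 ≤ r := by positivity
  have hr1 : r < 1 := mul_lt_one_of_nonneg_of_lt_one_left hD0.le hD1
    (Real.exp_le_one_iff.mpr (neg_nonpos.mpr (mul_nonneg hk htk.le)))
  have hstep : ∀ c, X c < Xe → X (c + 1) = r * X c := fun c hc => by
    rw [hrec, Ie_eq_zero_of_lt hc, mul_zero, zero_sub, mul_right_comm]
  intro c
  by_contra! hc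
  exact hL.ne' (tendsto_nhds_unique h (tendsto_zero_of_lt_of_step hr0 hr1 hXe hstep hc))

/-- in the abstract one-strain cycle recursion (index `0` is the
inoculum `X(1)`), a strain converging to a positive limit never falls below the
extinction limit. -/
theorem stmt8 (μ k tk D Xe : ℝ) (hμ : 0 < μ) (hk : 0 ≤ k) (htk : 0 < tk)
    (hD0 : 0 < D) (hD1 : D < 1) (hXe : 0 < Xe) (s : ℕ → ℝ) (X : ℕ → ℝ)
    (hX0 : 0 ≤ X 0)
    (hrec : ∀ c, X (c + 1) = D * X c * Real.exp (μ * s c * Ie Xe (X c) - k * tk))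
    (L : ℝ) (hL : 0 < L) (h : Filter.Tendsto X Filter.atTop (nhds L)) :
    ∀ c, Xe ≤ X c :=
  stmt8_general μ k tk D Xe hk htk hD0 hD1 hXe s X hrec L hL h
end

section
/- Consider the abstract cycle recursion for one strain with arbitrary real growth durations s_c. If X(c) converges to a positive limit as c → ∞, then s_c → (k t_k − log D)/μ as c → ∞. -/
open scoped Classical

/-- Lemma 4 of the paper: if a strain survives the abstract one-strain
cycle recursion, the growth durations converge to its equilibrium time. -/
theorem stmt9 (μ k tk D Xe : ℝ) (hμ : 0 < μ) (hk : 0 ≤ k) (htk : 0 < tk)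
    (hD0 : 0 < D) (hD1 : D < 1) (hXe : 0 < Xe) (s : ℕ → ℝ) (X : ℕ → ℝ)
    (hX0 : 0 ≤ X 0)
    (hrec : ∀ c, X (c + 1) = D * X c * Real.exp (μ * s c * Ie Xe (X c) - k * tk))
    (L : ℝ) (hL : 0 < L) (h : Filter.Tendsto X Filter.atTop (nhds L)) :
    Filter.Tendsto s Filter.atTop (nhds ((k * tk - Real.log D) / μ)) := by
  have hXpos : ∀ᶠ c in Filter.atTop, 0 < X c := h.eventually (eventually_gt_nhds hL)
  by_cases hcase : Xe ≤ L
  · -- survival case: eventually X c ≥ Xe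
    have hDXe : D * Xe < L := lt_of_lt_of_le (by nlinarith) hcase
    have h1 : ∀ᶠ c in Filter.atTop, D * Xe < X c := h.eventually (eventually_gt_nhds hDXe)
    have h1' : ∀ᶠ c in Filter.atTop, D * Xe < X (c + 1) := by
      obtain ⟨N, hN⟩ := Filter.eventually_atTop.1 h1
      exact Filter.eventually_atTop.2 ⟨N, fun c hc => hN (c + 1) (by omega)⟩
    have hge : ∀ᶠ c in Filter.atTop, Xe ≤ X c := by
      filter_upwards [h1', hXpos] with c hc hp
      by_contra hlt
      push_neg at hlt
      have hIe : Ie Xe (X c) = 0 := if_neg (not_le.2 hlt)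
      have hr := hrec c
      rw [hIe, mul_zero, zero_sub] at hr
      have hexp : Real.exp (-(k * tk)) ≤ 1 := by
        rw [Real.exp_le_one_iff]; nlinarith
      have h3 : D * X c * Real.exp (-(k * tk)) ≤ D * X c * 1 :=
        mul_le_mul_of_nonneg_left hexp (by positivity)
      have h4 : D * X c < D * Xe := by nlinarith
      linarith [hr.le, h3, h4]
    have heq : ∀ᶠ c in Filter.atTop,
        s c = ((Real.log (X (c + 1)) - Real.log (X c)) + (k * tk - Real.log D)) / μ := by
      filter_upwards [hge, hXpos] with c hc hp
      have hIe : Ie Xe (X c) = 1 := if_pos hc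
      have hr := hrec c
      rw [hIe, mul_one] at hr
      have hlog : Real.log (X (c + 1)) =
          Real.log D + Real.log (X c) + (μ * s c - k * tk) := by
        rw [hr, Real.log_mul (by positivity) (Real.exp_ne_zero _),
          Real.log_mul hD0.ne' hp.ne', Real.log_exp]
      rw [eq_div_iff hμ.ne']
      linear_combination (-1 : ℝ) * hlog
    have hX1 : Filter.Tendsto (fun c => X (c + 1)) Filter.atTop (nhds L) :=
      h.comp (Filter.tendsto_add_atTop_nat 1)
    have hlogX : Filter.Tendsto (fun c => Real.log (X c)) Filter.atTop
        (nhds (Real.log L)) := (Real.continuousAt_log hL.ne').tendsto.comp h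
    have hlogX1 : Filter.Tendsto (fun c => Real.log (X (c + 1))) Filter.atTop
        (nhds (Real.log L)) := (Real.continuousAt_log hL.ne').tendsto.comp hX1
    have hg : Filter.Tendsto
        (fun c => ((Real.log (X (c + 1)) - Real.log (X c)) + (k * tk - Real.log D)) / μ)
        Filter.atTop (nhds ((k * tk - Real.log D) / μ)) := by
      have := ((hlogX1.sub hlogX).add_const (k * tk - Real.log D)).div_const μ
      simpa using this
    exact Filter.Tendsto.congr' (Filter.EventuallyEq.symm heq) hg
  · exfalso
    push_neg at hcase
    have h2 : ∀ᶠ c in Filter.atTop, X c < Xe := h.eventually (eventually_lt_nhds hcase)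
    have heq2 : ∀ᶠ c in Filter.atTop,
        X (c + 1) = (D * Real.exp (-(k * tk))) * X c := by
      filter_upwards [h2] with c hc
      have hIe : Ie Xe (X c) = 0 := if_neg (not_le.2 hc)
      rw [hrec c, hIe, mul_zero, zero_sub]; ring
    have hX1 : Filter.Tendsto (fun c => X (c + 1)) Filter.atTop (nhds L) :=
      h.comp (Filter.tendsto_add_atTop_nat 1)
    have hX2 : Filter.Tendsto (fun c => (D * Real.exp (-(k * tk))) * X c)
        Filter.atTop (nhds ((D * Real.exp (-(k * tk))) * L)) := h.const_mul _
    have huniq : L = (D * Real.exp (-(k * tk))) * L :=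
      tendsto_nhds_unique hX1 (hX2.congr' (Filter.EventuallyEq.symm heq2))
    have hexp : Real.exp (-(k * tk)) ≤ 1 := by
      rw [Real.exp_le_one_iff]; nlinarith
    have hlt1 : D * Real.exp (-(k * tk)) < 1 := by
      nlinarith [Real.exp_pos (-(k * tk))]
    nlinarith [mul_pos (sub_pos.2 hlt1) hL]
end

section
/- Let μ_i, μ_j > 0, k_i, k_j ≥ 0, t_k > 0 and 0 < D < 1, and let (s_c)_{c≥1} be a real sequence. Let (X_i(c))_{c≥1} and (X_j(c))_{c≥1} be real sequences with X_i(1), X_j(1) ≥ 0 satisfying X_i(c+1) = D·X_i(c)·exp(μ_i s_c I_e(X_i(c)) − k_i t_k) and X_j(c+1) = D·X_j(c)·exp(μ_j s_c I_e(X_j(c)) − k_j t_k) for all c ≥ 1, where I_e(x) = 1 if x ≥ X_e and 0 otherwise for a fixed X_e > 0. If both X_i(c) and X_j(c) converge to positive limits as c → ∞, then (k_i t_k − log D)/μ_i = (k_j t_k − log D)/μ_j. -/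
/-!
A surviving strain converges to a positive limit, so the ratio `X (c+1) / X c` of consecutive
cycles tends to `1`. Taking logarithms, `μ s_c I_e(X c) → k t_k - log D`, which is positive since
`D < 1`; a nonzero limit forces the indicator to be eventually `1`, and `s_c` itself
converges to the equilibrium time `(k t_k - log D) / μ`. Both strains see the same sequence `s_c`, so their equilibrium times agree
by uniqueness of limits.
-/

open scoped Classical

open Filter Topology Real

noncomputable def equilibriumTime (μ k tk D : ℝ) : ℝ := (k * tk - log D) / μ

lemma mul_sub_log_pos_of_lt_one {k tk D : ℝ} (hk : 0 ≤ k) (htk : 0 ≤ tk) (hD0 : 0 < D)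
    (hD1 : D < 1) : 0 < k * tk - log D := by
  have := log_neg hD0 hD1
  nlinarith [mul_nonneg hk htk]

lemma tendsto_of_tendsto_mul_Ie {ι : Type*} {l : Filter ι} {f x : ι → ℝ} {Xe A : ℝ}
    (hA : A ≠ 0) (h : Tendsto (fun c => f c * Ie Xe (x c)) l (𝓝 A)) : Tendsto f l (𝓝 A) := by
  refine h.congr' ?_
  filter_upwards [h.eventually_ne hA] with c hc
  by_cases hx : Xe ≤ x c <;> simp_all [Ie]

lemma tendsto_one_of_succ_eq_mul {X r : ℕ → ℝ} {L : ℝ} (hL : L ≠ 0)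
    (hX : Tendsto X atTop (𝓝 L)) (hrec : ∀ c, X (c + 1) = X c * r c) :
    Tendsto r atTop (𝓝 1) := by
  have hquot : Tendsto (fun c => X (c + 1) / X c) atTop (𝓝 1) := by
    have := ((tendsto_add_atTop_iff_nat 1).2 hX).div hX hL
    rwa [div_self hL] at this
  refine hquot.congr' ?_
  filter_upwards [hX.eventually_ne hL] with c hc
  rw [hrec c, mul_div_cancel_left₀ _ hc]

lemma tendsto_neg_log_of_tendsto_mul_exp {ι : Type*} {l : Filter ι} {g : ι → ℝ} {D : ℝ}
    (hD : 0 < D) (h : Tendsto (fun c => D * exp (g c)) l (𝓝 1)) :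
    Tendsto g l (𝓝 (-log D)) := by
  have hlog : Tendsto (fun c => log (D * exp (g c))) l (𝓝 0) := by
    have := (continuousAt_log one_ne_zero).tendsto.comp h
    rwa [log_one] at this
  have hsplit : ∀ c, log (D * exp (g c)) - log D = g c := fun c => by
    rw [log_mul hD.ne' (exp_ne_zero _), log_exp]; ring
  simpa [hsplit] using hlog.sub_const (log D)

lemma tendsto_equilibriumTime_of_survives {μ k tk D Xe L : ℝ} {s X : ℕ → ℝ} (hμ : μ ≠ 0)
    (hD : 0 < D) (hA : k * tk - log D ≠ 0)
    (hrec : ∀ c, X (c + 1) = D * X c * exp (μ * s c * Ie Xe (X c) - k * tk))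
    (hL : L ≠ 0) (hX : Tendsto X atTop (𝓝 L)) :
    Tendsto s atTop (𝓝 (equilibriumTime μ k tk D)) := by
  have hratio : Tendsto (fun c => D * exp (μ * s c * Ie Xe (X c) - k * tk)) atTop (𝓝 1) :=
    tendsto_one_of_succ_eq_mul hL hX fun c => by rw [hrec c]; ring
  have hgrowth : Tendsto (fun c => μ * s c * Ie Xe (X c)) atTop (𝓝 (k * tk - log D)) := by
    simpa [sub_eq_neg_add, add_comm] using
      (tendsto_neg_log_of_tendsto_mul_exp hD hratio).add_const (k * tk)
  simpa [equilibriumTime, mul_div_cancel_left₀ _ hμ] using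
    (tendsto_of_tendsto_mul_Ie (f := fun c => μ * s c) hA hgrowth).div_const μ

theorem stmt10_general (μi μj ki kj tk D Xe : ℝ) (hμi : 0 < μi) (hμj : 0 < μj)
    (hki : 0 ≤ ki) (hkj : 0 ≤ kj) (htk : 0 < tk) (hD0 : 0 < D) (hD1 : D < 1)
    (s : ℕ → ℝ) (Xi Xj : ℕ → ℝ)
    (hreci : ∀ c, Xi (c + 1) = D * Xi c * Real.exp (μi * s c * Ie Xe (Xi c) - ki * tk))
    (hrecj : ∀ c, Xj (c + 1) = D * Xj c * Real.exp (μj * s c * Ie Xe (Xj c) - kj * tk))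
    (Li Lj : ℝ) (hLi : 0 < Li) (hLj : 0 < Lj)
    (hi : Filter.Tendsto Xi Filter.atTop (nhds Li))
    (hj : Filter.Tendsto Xj Filter.atTop (nhds Lj)) :
    (ki * tk - Real.log D) / μi = (kj * tk - Real.log D) / μj :=
  tendsto_nhds_unique
    (tendsto_equilibriumTime_of_survives hμi.ne' hD0
      (mul_sub_log_pos_of_lt_one hki htk.le hD0 hD1).ne' hreci hLi.ne' hi)
    (tendsto_equilibriumTime_of_survives hμj.ne' hD0
      (mul_sub_log_pos_of_lt_one hkj htk.le hD0 hD1).ne' hrecj hLj.ne' hj)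

/-- Corollary 1 of the paper: two strains sharing the same growth
durations that both survive cyclic treatment have equal equilibrium times. -/
theorem stmt10 (μi μj ki kj tk D Xe : ℝ) (hμi : 0 < μi) (hμj : 0 < μj)
    (hki : 0 ≤ ki) (hkj : 0 ≤ kj) (htk : 0 < tk) (hD0 : 0 < D) (hD1 : D < 1)
    (hXe : 0 < Xe) (s : ℕ → ℝ) (Xi Xj : ℕ → ℝ) (hXi0 : 0 ≤ Xi 0) (hXj0 : 0 ≤ Xj 0)
    (hreci : ∀ c, Xi (c + 1) = D * Xi c * Real.exp (μi * s c * Ie Xe (Xi c) - ki * tk))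
    (hrecj : ∀ c, Xj (c + 1) = D * Xj c * Real.exp (μj * s c * Ie Xe (Xj c) - kj * tk))
    (Li Lj : ℝ) (hLi : 0 < Li) (hLj : 0 < Lj)
    (hi : Filter.Tendsto Xi Filter.atTop (nhds Li))
    (hj : Filter.Tendsto Xj Filter.atTop (nhds Lj)) :
    (ki * tk - Real.log D) / μi = (kj * tk - Real.log D) / μj :=
  stmt10_general μi μj ki kj tk D Xe hμi hμj hki hkj htk hD0 hD1 s Xi Xj hreci hrecj Li Lj hLi hLj
    hi hj
end

section
/- In the cyclic-treatment model, strain i survives (i.e., X_i(t_c^f) converges to a positive limit as c → ∞) if and only if i ∈ J and t_eq,i = min{ t_eq,j : j ∈ J }, where J = { j : X_e ≤ X_{j0} and t_eq,j ≤ min{ t_g , t_1 − (1/μ_j) · log(X_e / X_{j0}) } }. -/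
open scoped Classical

lemma Ie_one {Xe x : ℝ} (h : Xe ≤ x) : Ie Xe x = 1 := if_pos h
lemma Ie_zero {Xe x : ℝ} (h : x < Xe) : Ie Xe x = 0 := if_neg (not_le.2 h)
lemma Ie_nonneg (Xe x : ℝ) : 0 ≤ Ie Xe x := by unfold Ie; split <;> norm_num

lemma X0_succ {n : ℕ} (μ k : Fin n → ℝ) (tg tk D Xe : ℝ)
    (Xinit : Fin n → ℝ) (tsat : ℕ → ℝ) (c : ℕ) (i : Fin n) :
    X0 μ k tg tk D Xe Xinit tsat (c + 1) i =
      D * X0 μ k tg tk D Xe Xinit tsat c i *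
        Real.exp (μ i * tdur μ k tg tk D Xe Xinit tsat c *
            Ie Xe (X0 μ k tg tk D Xe Xinit tsat c i) - k i * tk) := by
  rw [tdur]; rfl

/-- Proposition 2 of the paper, selection conditions: strain `i`
survives iff `i ∈ J` and its equilibrium time is the minimum of the equilibrium
times over `J`. -/
theorem stmt11 (n : ℕ) (hn : 0 < n) (μ k : Fin n → ℝ) (tg tk D Xe K : ℝ)
    (Xinit : Fin n → ℝ) (tsat : ℕ → ℝ)
    (hμ : ∀ i, 0 < μ i) (hk : ∀ i, 0 ≤ k i) (htg : 0 < tg) (htk : 0 < tk)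
    (hD0 : 0 < D) (hD1 : D < 1) (hXe : 0 < Xe) (hXeK : Xe < K)
    (hXinit : ∀ i, 0 ≤ Xinit i) (hsum : ∑ i, Xinit i ≤ K)
    (htsat : ∀ c, (∃ j, Xe ≤ X0 μ k tg tk D Xe Xinit tsat c j) →
      ∑ i, X0 μ k tg tk D Xe Xinit tsat c i *
        Real.exp (μ i * tsat c * Ie Xe (X0 μ k tg tk D Xe Xinit tsat c i)) = K)
    (i : Fin n) :
    (∃ L, 0 < L ∧
        Filter.Tendsto (fun c => X0 μ k tg tk D Xe Xinit tsat c i) Filter.atTop (nhds L)) ↔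
      (i ∈ Jset μ k tg tk D Xe Xinit tsat ∧
        IsLeast ((fun j => teq (k j) tk D (μ j)) '' (Jset μ k tg tk D Xe Xinit tsat))
          (teq (k i) tk D (μ i))) := by
  set Y : ℕ → Fin n → ℝ := X0 μ k tg tk D Xe Xinit tsat with hY
  set T : ℕ → ℝ := tdur μ k tg tk D Xe Xinit tsat with hT
  set τ : Fin n → ℝ := fun j => teq (k j) tk D (μ j) with hτdef
  have hlogD : Real.log D < 0 := Real.log_neg hD0 hD1
  have hτpos : ∀ j, 0 < τ j := by
    intro j
    have : 0 < k j * tk - Real.log D := by nlinarith [mul_nonneg (hk j) htk.le]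
    exact div_pos this (hμ j)
  have hμτ : ∀ j, μ j * τ j = k j * tk - Real.log D := by
    intro j
    show μ j * ((k j * tk - Real.log D) / μ j) = _
    rw [mul_comm]
    exact div_mul_cancel₀ _ (hμ j).ne'
  have hfac : ∀ j, D * Real.exp (-(k j * tk)) = Real.exp (-(μ j * τ j)) := by
    intro j
    rw [hμτ j, neg_sub, sub_eq_add_neg, Real.exp_add, Real.exp_log hD0]
  have hYsucc : ∀ c j, Y (c + 1) j =
      D * Y c j * Real.exp (μ j * T c * Ie Xe (Y c j) - k j * tk) := by
    intro c j; rw [hY, hT]; exact X0_succ μ k tg tk D Xe Xinit tsat c j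
  have hYsucc' : ∀ c j, Y (c + 1) j =
      (Y c j * Real.exp (μ j * T c * Ie Xe (Y c j))) * Real.exp (-(μ j * τ j)) := by
    intro c j
    rw [hYsucc c j, ← hfac j, sub_eq_add_neg, Real.exp_add]
    ring
  have hTdef : ∀ c, T c = if ∃ j, Xe ≤ Y c j then min tg (tsat c) else tg := by
    intro c; rw [hT, hY]; rfl
  have hTle : ∀ c, T c ≤ tg := by
    intro c; rw [hTdef c]
    split
    · exact min_le_left _ _
    · exact le_rfl
  have h0 : ∀ c j, 0 ≤ Y c j := by
    intro c
    induction c with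
    | zero => exact hXinit
    | succ c ih =>
      intro j; rw [hYsucc c j]
      exact mul_nonneg (mul_nonneg hD0.le (ih j)) (Real.exp_nonneg _)
  have habove : ∀ c j, Xe ≤ Y c j →
      Y (c + 1) j = Y c j * Real.exp (μ j * (T c - τ j)) := by
    intro c j h
    rw [hYsucc' c j, Ie_one h, mul_one, mul_assoc, ← Real.exp_add]
    congr 2
    ring
  -- below the extinction limit: geometric decay
  have hbelow : ∀ c j, Y c j < Xe → Y (c + 1) j = Y c j * Real.exp (-(μ j * τ j)) := by
    intro c j h
    rw [hYsucc' c j, Ie_zero h, mul_zero, Real.exp_zero, mul_one]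
  have hbelow_lt : ∀ c j, Y c j < Xe → Y (c + 1) j < Xe := by
    intro c j h
    rw [hbelow c j h]
    calc Y c j * Real.exp (-(μ j * τ j)) ≤ Y c j * 1 := by
          refine mul_le_mul_of_nonneg_left ?_ (h0 c j)
          exact Real.exp_le_one_iff.2 (by nlinarith [hτpos j, hμ j])
      _ < Xe := by rwa [mul_one]
  have habs : ∀ c j, Y c j < Xe → ∀ m, Y (c + m) j < Xe := by
    intro c j h m
    induction m with
    | zero => exact h
    | succ m ih => exact hbelow_lt (c + m) j ih
  have haboveearlier : ∀ c c' j, c ≤ c' → Xe ≤ Y c' j → Xe ≤ Y c j := by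
    intro c c' j hle h
    by_contra hcon
    push_neg at hcon
    have := habs c j hcon (c' - c)
    rw [Nat.add_sub_cancel' hle] at this
    exact absurd h (not_le.2 this)
  -- sums bounded by K
  have hGofK : ∀ c, (∑ j, Y c j ≤ K) →
      ∑ j, Y c j * Real.exp (μ j * T c * Ie Xe (Y c j)) ≤ K := by
    intro c hc
    by_cases hex : ∃ j, Xe ≤ Y c j
    · have hts := htsat c hex
      have hTts : T c ≤ tsat c := by rw [hTdef c, if_pos hex]; exact min_le_right _ _
      calc ∑ j, Y c j * Real.exp (μ j * T c * Ie Xe (Y c j))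
          ≤ ∑ j, Y c j * Real.exp (μ j * tsat c * Ie Xe (Y c j)) := by
            refine Finset.sum_le_sum fun j _ => ?_
            refine mul_le_mul_of_nonneg_left (Real.exp_le_exp.2 ?_) (h0 c j)
            exact mul_le_mul_of_nonneg_right
              (mul_le_mul_of_nonneg_left hTts (hμ j).le) (Ie_nonneg _ _)
        _ = K := hts
    · push_neg at hex
      have hz : ∀ j, Ie Xe (Y c j) = 0 := fun j => Ie_zero (hex j)
      simp only [hz, mul_zero, Real.exp_zero, mul_one]
      exact hc
  have hKsum : ∀ c, ∑ j, Y c j ≤ K := by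
    intro c
    induction c with
    | zero => exact hsum
    | succ c ih =>
      calc ∑ j, Y (c + 1) j
          = ∑ j, (Y c j * Real.exp (μ j * T c * Ie Xe (Y c j))) *
              Real.exp (-(μ j * τ j)) := Finset.sum_congr rfl fun j _ => hYsucc' c j
        _ ≤ ∑ j, (Y c j * Real.exp (μ j * T c * Ie Xe (Y c j))) * 1 := by
            refine Finset.sum_le_sum fun j _ => ?_
            refine mul_le_mul_of_nonneg_left ?_
              (mul_nonneg (h0 c j) (Real.exp_nonneg _))
            exact Real.exp_le_one_iff.2 (by nlinarith [hτpos j, hμ j])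
        _ = ∑ j, Y c j * Real.exp (μ j * T c * Ie Xe (Y c j)) := by simp
        _ ≤ K := hGofK c ih
  have hYleK : ∀ c j, Y c j ≤ K :=
    fun c j => le_trans
      (Finset.single_le_sum (fun j _ => h0 c j) (Finset.mem_univ j)) (hKsum c)
  -- saturation time after the first cycle is at least any common lower bound of the
  -- equilibrium times of the surviving strains
  have hsat_ge : ∀ c t0, (∃ j, Xe ≤ Y (c + 1) j) →
      (∀ j, Xe ≤ Y (c + 1) j → t0 ≤ τ j) → t0 ≤ tsat (c + 1) := by
    intro c t0 hex hub
    by_contra hlt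
    push_neg at hlt
    have hts := htsat (c + 1) hex
    have hstrict : ∑ j, Y (c + 1) j * Real.exp (μ j * tsat (c + 1) * Ie Xe (Y (c + 1) j))
        < ∑ j, Y (c + 1) j * Real.exp (μ j * t0 * Ie Xe (Y (c + 1) j)) := by
      obtain ⟨j0, hj0⟩ := hex
      refine Finset.sum_lt_sum (fun j _ => ?_) ⟨j0, Finset.mem_univ j0, ?_⟩
      · refine mul_le_mul_of_nonneg_left (Real.exp_le_exp.2 ?_) (h0 _ j)
        exact mul_le_mul_of_nonneg_right
          (mul_le_mul_of_nonneg_left hlt.le (hμ j).le) (Ie_nonneg _ _)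
      · rw [Ie_one hj0, mul_one, mul_one]
        refine mul_lt_mul_of_pos_left (Real.exp_lt_exp.2 ?_) (lt_of_lt_of_le hXe hj0)
        exact (mul_lt_mul_iff_right₀ (hμ j0)).2 hlt
    have hle : ∑ j, Y (c + 1) j * Real.exp (μ j * t0 * Ie Xe (Y (c + 1) j)) ≤ K := by
      refine le_trans (Finset.sum_le_sum fun j _ => ?_) (hGofK c (hKsum c))
      by_cases hj : Xe ≤ Y (c + 1) j
      · have hτj := hub j hj
        have hG0 : 0 ≤ Y c j * Real.exp (μ j * T c * Ie Xe (Y c j)) :=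
          mul_nonneg (h0 c j) (Real.exp_nonneg _)
        have hexp1 : Real.exp (-(μ j * τ j)) * Real.exp (μ j * t0) ≤ 1 := by
          rw [← Real.exp_add]
          refine Real.exp_le_one_iff.2 ?_
          nlinarith [mul_le_mul_of_nonneg_left hτj (hμ j).le]
        rw [Ie_one hj, mul_one, hYsucc' c j]
        calc (Y c j * Real.exp (μ j * T c * Ie Xe (Y c j))) * Real.exp (-(μ j * τ j)) *
              Real.exp (μ j * t0)
            = (Y c j * Real.exp (μ j * T c * Ie Xe (Y c j))) *
              (Real.exp (-(μ j * τ j)) * Real.exp (μ j * t0)) := by ring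
          _ ≤ (Y c j * Real.exp (μ j * T c * Ie Xe (Y c j))) * 1 :=
              mul_le_mul_of_nonneg_left hexp1 hG0
          _ = Y c j * Real.exp (μ j * T c * Ie Xe (Y c j)) := mul_one _
      · rw [Ie_zero (not_le.1 hj), mul_zero, Real.exp_zero, mul_one, hYsucc' c j]
        have hG0 : 0 ≤ Y c j * Real.exp (μ j * T c * Ie Xe (Y c j)) :=
          mul_nonneg (h0 c j) (Real.exp_nonneg _)
        calc (Y c j * Real.exp (μ j * T c * Ie Xe (Y c j))) * Real.exp (-(μ j * τ j))
            ≤ (Y c j * Real.exp (μ j * T c * Ie Xe (Y c j))) * 1 := by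
              refine mul_le_mul_of_nonneg_left ?_ hG0
              exact Real.exp_le_one_iff.2 (by nlinarith [hτpos j, hμ j])
          _ = _ := mul_one _
    rw [hts] at hstrict
    linarith
  -- characterization of membership in J
  have hJ_iff : ∀ j, j ∈ Jset μ k tg tk D Xe Xinit tsat ↔
      (Xe ≤ Y 0 j ∧ Xe ≤ Y 1 j ∧ τ j ≤ tg) := by
    intro j
    have hY0 : Y 0 j = Xinit j := rfl
    simp only [Jset, Set.mem_setOf_eq, le_min_iff, ← hT]
    constructor
    · rintro ⟨h1, h2, h3⟩
      have hY0pos : 0 < Xinit j := lt_of_lt_of_le hXe h1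
      refine ⟨h1, ?_, h2⟩
      have h4 : (1 / μ j) * Real.log (Xe / Xinit j) ≤ T 0 - τ j := by linarith
      have h5 : Real.log (Xe / Xinit j) ≤ μ j * (T 0 - τ j) := by
        have := mul_le_mul_of_nonneg_left h4 (hμ j).le
        rwa [← mul_assoc, mul_one_div_cancel (hμ j).ne', one_mul] at this
      rw [habove 0 j h1, hY0]
      calc Xe = Xinit j * (Xe / Xinit j) := by field_simp
        _ ≤ Xinit j * Real.exp (μ j * (T 0 - τ j)) := by
            refine mul_le_mul_of_nonneg_left ?_ hY0pos.le
            rw [← Real.exp_log (div_pos hXe hY0pos)]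
            exact Real.exp_le_exp.2 h5
    · rintro ⟨h1, h2, h3⟩
      have hY0pos : 0 < Xinit j := lt_of_lt_of_le hXe h1
      refine ⟨h1, h3, ?_⟩
      rw [habove 0 j h1, hY0] at h2
      have h5 : Real.log (Xe / Xinit j) ≤ μ j * (T 0 - τ j) := by
        have hd : Xe / Xinit j ≤ Real.exp (μ j * (T 0 - τ j)) := by
          rw [div_le_iff₀ hY0pos, mul_comm]
          exact h2
        calc Real.log (Xe / Xinit j) ≤ Real.log (Real.exp (μ j * (T 0 - τ j))) :=
              Real.log_le_log (div_pos hXe hY0pos) hd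
          _ = μ j * (T 0 - τ j) := Real.log_exp _
      have h6 : (1 / μ j) * Real.log (Xe / Xinit j) ≤ T 0 - τ j := by
        have := mul_le_mul_of_nonneg_left h5 (le_of_lt (one_div_pos.2 (hμ j)))
        rwa [← mul_assoc, one_div_mul_cancel (hμ j).ne', one_mul] at this
      linarith
  -- the minimizer of τ over J survives, with eventually monotone trajectory
  have survive : ∀ m, m ∈ Jset μ k tg tk D Xe Xinit tsat →
      (∀ j ∈ Jset μ k tg tk D Xe Xinit tsat, τ m ≤ τ j) →
      ∀ c, Xe ≤ Y (c + 1) m ∧ Y (c + 1) m ≤ Y (c + 2) m := by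
    intro m hm hmin
    obtain ⟨hm0, hm1, hmtg⟩ := (hJ_iff m).1 hm
    have hkey : ∀ c, Xe ≤ Y (c + 1) m → τ m ≤ T (c + 1) := by
      intro c hc
      have hex : ∃ j, Xe ≤ Y (c + 1) j := ⟨m, hc⟩
      have hub : ∀ j, Xe ≤ Y (c + 1) j → τ m ≤ τ j := by
        intro j hj
        by_cases hjt : τ j ≤ tg
        · have hj0 : Xe ≤ Y 0 j := haboveearlier 0 (c + 1) j (Nat.zero_le _) hj
          have hj1 : Xe ≤ Y 1 j := haboveearlier 1 (c + 1) j (by omega) hj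
          exact hmin j ((hJ_iff j).2 ⟨hj0, hj1, hjt⟩)
        · exact le_trans hmtg (le_of_not_ge hjt)
      have hts := hsat_ge c (τ m) hex hub
      rw [hTdef (c + 1), if_pos hex]
      exact le_min hmtg hts
    have hstep : ∀ c, Xe ≤ Y (c + 1) m → Y (c + 1) m ≤ Y (c + 2) m := by
      intro c hc
      rw [habove (c + 1) m hc]
      refine le_mul_of_one_le_right (le_trans hXe.le hc) ?_
      exact Real.one_le_exp (mul_nonneg (hμ m).le (sub_nonneg.2 (hkey c hc)))
    intro c
    induction c with
    | zero => exact ⟨hm1, hstep 0 hm1⟩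
    | succ c ih =>
      have hc1 : Xe ≤ Y (c + 2) m := le_trans ih.1 ih.2
      exact ⟨hc1, hstep (c + 1) hc1⟩
  constructor
  · -- forward direction
    rintro ⟨L, hL, htend⟩
    have hever : ∀ c, Xe ≤ Y c i := by
      by_contra hcon
      push_neg at hcon
      obtain ⟨c0, hc0⟩ := hcon
      set q := Real.exp (-(μ i * τ i)) with hq
      have hql : q < 1 := Real.exp_lt_one_iff.2 (by nlinarith [hτpos i, hμ i])
      have hq0 : 0 ≤ q := (Real.exp_pos _).le
      have hgeo : ∀ m, Y (c0 + m) i < Xe ∧ Y (c0 + m) i ≤ Xe * q ^ m := by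
        intro m
        induction m with
        | zero => exact ⟨hc0, by simpa using hc0.le⟩
        | succ m ih =>
          have heq : Y (c0 + (m + 1)) i = Y (c0 + m) i * q := by
            rw [show c0 + (m + 1) = (c0 + m) + 1 by ring]
            exact hbelow (c0 + m) i ih.1
          constructor
          · rw [show c0 + (m + 1) = (c0 + m) + 1 by ring]
            exact hbelow_lt (c0 + m) i ih.1
          · rw [heq, pow_succ, ← mul_assoc]
            exact mul_le_mul_of_nonneg_right ih.2 hq0
      have h1 : Filter.Tendsto (fun m => Y (c0 + m) i) Filter.atTop (nhds 0) := by
        refine squeeze_zero (fun m => h0 _ _) (fun m => (hgeo m).2) ?_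
        have := (tendsto_pow_atTop_nhds_zero_of_lt_one hq0 hql).const_mul Xe
        simpa using this
      have h2 : Filter.Tendsto (fun m => Y (c0 + m) i) Filter.atTop (nhds L) := by
        have h3 := (Filter.tendsto_add_atTop_iff_nat c0).2 htend
        simpa [add_comm] using h3
      have := tendsto_nhds_unique h2 h1
      linarith
    have htgτ : τ i ≤ tg := by
      by_contra hcon
      push_neg at hcon
      set r := Real.exp (μ i * (tg - τ i)) with hr
      have hr1 : r < 1 := Real.exp_lt_one_iff.2 (mul_neg_of_pos_of_neg (hμ i) (by linarith))
      have hr0 : 0 ≤ r := (Real.exp_pos _).le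
      have hdecay : ∀ c, Y c i ≤ Y 0 i * r ^ c := by
        intro c
        induction c with
        | zero => simp
        | succ c ih =>
          rw [habove c i (hever c)]
          calc Y c i * Real.exp (μ i * (T c - τ i)) ≤ Y c i * r := by
                refine mul_le_mul_of_nonneg_left (Real.exp_le_exp.2 ?_) (h0 c i)
                have := hTle c
                nlinarith [hμ i]
            _ ≤ (Y 0 i * r ^ c) * r := mul_le_mul_of_nonneg_right ih hr0
            _ = Y 0 i * r ^ (c + 1) := by ring
      have htend0 : Filter.Tendsto (fun c => Y 0 i * r ^ c) Filter.atTop (nhds 0) := by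
        have := (tendsto_pow_atTop_nhds_zero_of_lt_one hr0 hr1).const_mul (Y 0 i)
        simpa using this
      obtain ⟨c, hc⟩ := (htend0.eventually (gt_mem_nhds hXe)).exists
      exact absurd (le_trans (hever c) (hdecay c)) (not_le.2 hc)
    have hiJ : i ∈ Jset μ k tg tk D Xe Xinit tsat :=
      (hJ_iff i).2 ⟨hever 0, hever 1, htgτ⟩
    -- pick the minimizer over J
    obtain ⟨m, hms, hmmin⟩ := Finset.exists_min_image
      (Finset.univ.filter (fun j => j ∈ Jset μ k tg tk D Xe Xinit tsat)) τ
      ⟨i, Finset.mem_filter.2 ⟨Finset.mem_univ i, hiJ⟩⟩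
    have hmJ : m ∈ Jset μ k tg tk D Xe Xinit tsat := (Finset.mem_filter.1 hms).2
    have hmlb : ∀ j ∈ Jset μ k tg tk D Xe Xinit tsat, τ m ≤ τ j := by
      intro j hj
      exact hmmin j (Finset.mem_filter.2 ⟨Finset.mem_univ j, hj⟩)
    have hmsur := survive m hmJ hmlb
    -- show τ i = τ m via boundedness of the log-difference
    have hτeq : τ i = τ m := by
      have hδ0 : τ m ≤ τ i := hmlb i hiJ
      by_contra hne
      have hδpos : 0 < τ i - τ m := sub_pos.2 (lt_of_le_of_ne hδ0 (Ne.symm hne))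
      have hA : ∀ c : ℕ, Real.log (Y (c + 1) i) / μ i - Real.log (Y (c + 1) m) / μ m =
          (Real.log (Y 1 i) / μ i - Real.log (Y 1 m) / μ m) - c * (τ i - τ m) := by
        intro c
        induction c with
        | zero => simp
        | succ c ih =>
          have hlogstep : ∀ s : Fin n, Xe ≤ Y (c + 1) s →
              Real.log (Y (c + 2) s) = Real.log (Y (c + 1) s) + μ s * (T (c + 1) - τ s) := by
            intro s hs
            rw [show c + 2 = (c + 1) + 1 from rfl, habove (c + 1) s hs,
              Real.log_mul (lt_of_lt_of_le hXe hs).ne' (Real.exp_ne_zero _),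
              Real.log_exp]
          have e1 : (Real.log (Y (c + 1) i) + μ i * (T (c + 1) - τ i)) / μ i
              = Real.log (Y (c + 1) i) / μ i + (T (c + 1) - τ i) := by
            rw [add_div, mul_div_cancel_left₀ _ (hμ i).ne']
          have e2 : (Real.log (Y (c + 1) m) + μ m * (T (c + 1) - τ m)) / μ m
              = Real.log (Y (c + 1) m) / μ m + (T (c + 1) - τ m) := by
            rw [add_div, mul_div_cancel_left₀ _ (hμ m).ne']
          rw [show c + 1 + 1 = c + 2 from rfl, hlogstep i (hever (c + 1)),
            hlogstep m (hmsur c).1, e1, e2]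
          push_cast
          linarith [ih]
      have hbound : ∀ c : ℕ, Real.log Xe / μ i - Real.log K / μ m ≤
          Real.log (Y (c + 1) i) / μ i - Real.log (Y (c + 1) m) / μ m := by
        intro c
        have h1 : Real.log Xe ≤ Real.log (Y (c + 1) i) :=
          Real.log_le_log hXe (hever (c + 1))
        have h2 : Real.log (Y (c + 1) m) ≤ Real.log K :=
          Real.log_le_log (lt_of_lt_of_le hXe (hmsur c).1) (hYleK _ _)
        have h3 := (div_le_div_iff_of_pos_right (hμ i)).2 h1
        have h4 := (div_le_div_iff_of_pos_right (hμ m)).2 h2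
        linarith
      obtain ⟨c, hc⟩ := exists_nat_gt
        (((Real.log (Y 1 i) / μ i - Real.log (Y 1 m) / μ m) -
          (Real.log Xe / μ i - Real.log K / μ m)) / (τ i - τ m))
      have h7 := hA c
      have h8 := hbound c
      have h9 := (div_lt_iff₀ hδpos).1 hc
      linarith
    refine ⟨hiJ, ⟨⟨i, hiJ, rfl⟩, ?_⟩⟩
    rintro y ⟨j, hj, rfl⟩
    calc τ i = τ m := hτeq
      _ ≤ τ j := hmlb j hj
  · -- backward direction
    rintro ⟨hiJ, hleast⟩
    have hlb : ∀ j ∈ Jset μ k tg tk D Xe Xinit tsat, τ i ≤ τ j := by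
      intro j hj
      exact hleast.2 (Set.mem_image_of_mem _ hj)
    have hsur := survive i hiJ hlb
    have hmono : Monotone (fun c => Y (c + 1) i) :=
      monotone_nat_of_le_succ (fun c => (hsur c).2)
    have hbdd : BddAbove (Set.range fun c => Y (c + 1) i) := by
      refine ⟨K, ?_⟩
      rintro x ⟨c, rfl⟩
      exact hYleK _ _
    have htendsup := tendsto_atTop_ciSup hmono hbdd
    refine ⟨⨆ c, Y (c + 1) i, ?_, ?_⟩
    · calc (0 : ℝ) < Xe := hXe
        _ ≤ Y 1 i := (hsur 0).1
        _ ≤ ⨆ c, Y (c + 1) i := le_ciSup hbdd 0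
    · exact (Filter.tendsto_add_atTop_iff_nat 1).1 htendsup
end

section
/- In the cyclic-treatment model, if the total population goes extinct (i.e., X_i(t_c^f) → 0 as c → ∞ for every strain i = 1,…,n), then the growth duration satisfies t_c = t_g for every cycle c > 1. -/
open scoped Classical

/-- Corollary 2, part 1 of the paper: under total population
extinction, saturation is never reached after the first cycle, i.e. the growth
duration equals `t_g` for every paper cycle `c > 1` (here index `c ≥ 1`). -/
theorem stmt12 (n : ℕ) (hn : 0 < n) (μ k : Fin n → ℝ) (tg tk D Xe K : ℝ)
    (Xinit : Fin n → ℝ) (tsat : ℕ → ℝ)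
    (hμ : ∀ i, 0 < μ i) (hk : ∀ i, 0 ≤ k i) (htg : 0 < tg) (htk : 0 < tk)
    (hD0 : 0 < D) (hD1 : D < 1) (hXe : 0 < Xe) (hXeK : Xe < K)
    (hXinit : ∀ i, 0 ≤ Xinit i) (hsum : ∑ i, Xinit i ≤ K)
    (htsat : ∀ c, (∃ j, Xe ≤ X0 μ k tg tk D Xe Xinit tsat c j) →
      ∑ i, X0 μ k tg tk D Xe Xinit tsat c i *
        Real.exp (μ i * tsat c * Ie Xe (X0 μ k tg tk D Xe Xinit tsat c i)) = K)
    (hext : ∀ i, Filter.Tendsto (fun c => X0 μ k tg tk D Xe Xinit tsat c i) Filter.atTop (nhds 0)) :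
    ∀ c, 1 ≤ c → tdur μ k tg tk D Xe Xinit tsat c = tg := by
  classical
  set X := X0 μ k tg tk D Xe Xinit tsat with hXdef
  set td := tdur μ k tg tk D Xe Xinit tsat with htddef
  have hlogD : Real.log D < 0 := Real.log_neg hD0 hD1
  set T : Fin n → ℝ := fun i => k i * tk - Real.log D with hTdef
  have hT : ∀ i, 0 < T i := by
    intro i
    have h1 : 0 ≤ k i * tk := mul_nonneg (hk i) htk.le
    simp only [hTdef]; linarith
  set τ : Fin n → ℝ := fun i => T i / μ i with hτdef
  have hμτ : ∀ i, μ i * τ i = T i := by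
    intro i; simp only [hτdef]; exact mul_div_cancel₀ _ (hμ i).ne'
  have htdif : ∀ c, td c = if ∃ j, Xe ≤ X c j then min tg (tsat c) else tg := fun c => rfl
  have hstep : ∀ c i, X (c + 1) i
      = D * X c i * Real.exp (μ i * td c * Ie Xe (X c i) - k i * tk) := fun c i => rfl
  have hXnn : ∀ c i, 0 ≤ X c i := by
    intro c
    induction c with
    | zero => exact hXinit
    | succ c ih =>
      intro i
      rw [hstep]
      exact mul_nonneg (mul_nonneg hD0.le (ih i)) (Real.exp_pos _).le
  set g : ℕ → Fin n → ℝ := fun c i => X c i * Real.exp (μ i * td c * Ie Xe (X c i)) with hgdef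
  have hgnn : ∀ c i, 0 ≤ g c i := fun c i =>
    mul_nonneg (hXnn c i) (Real.exp_pos _).le
  have hstep' : ∀ c i, X (c + 1) i = g c i * Real.exp (-(T i)) := by
    intro c i
    rw [hstep c i]
    have hD : Real.exp (-(T i)) = D * Real.exp (-(k i * tk)) := by
      rw [hTdef]
      rw [show -(k i * tk - Real.log D) = Real.log D + -(k i * tk) by ring, Real.exp_add,
        Real.exp_log hD0]
    rw [hgdef]
    simp only []
    rw [hD, show μ i * td c * Ie Xe (X c i) - k i * tk
        = μ i * td c * Ie Xe (X c i) + -(k i * tk) by ring, Real.exp_add]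
    ring
  have hpot : ∀ c i, X (c + 1) i * Real.exp (T i) = g c i := by
    intro c i
    rw [hstep' c i, mul_assoc, ← Real.exp_add, neg_add_cancel, Real.exp_zero, mul_one]
  have hIenn : ∀ x, 0 ≤ Ie Xe x := by
    intro x; unfold Ie; split <;> norm_num
  have hterm_mono : ∀ c (t s : ℝ), t ≤ s → ∀ i,
      X c i * Real.exp (μ i * t * Ie Xe (X c i)) ≤ X c i * Real.exp (μ i * s * Ie Xe (X c i)) := by
    intro c t s hts i
    apply mul_le_mul_of_nonneg_left _ (hXnn c i)
    apply Real.exp_le_exp.2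
    rw [mul_right_comm (μ i) t, mul_right_comm (μ i) s]
    exact mul_le_mul_of_nonneg_left hts (mul_nonneg (hμ i).le (hIenn _))
  have hSG : ∀ c, (∑ i, X c i) ≤ K → (∑ i, g c i) ≤ K := by
    intro c hS
    by_cases hA : ∃ j, Xe ≤ X c j
    · have h1 : td c = min tg (tsat c) := by rw [htdif, if_pos hA]
      calc (∑ i, g c i)
          ≤ ∑ i, X c i * Real.exp (μ i * tsat c * Ie Xe (X c i)) := by
            apply Finset.sum_le_sum
            intro i _
            exact hterm_mono c (td c) (tsat c) (by rw [h1]; exact min_le_right _ _) i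
        _ = K := htsat c hA
    · have heq : ∀ i, g c i = X c i := by
        intro i
        have hIe : Ie Xe (X c i) = 0 := if_neg fun h => hA ⟨i, h⟩
        rw [hgdef]; simp only []; rw [hIe, mul_zero, Real.exp_zero, mul_one]
      calc (∑ i, g c i) = ∑ i, X c i := Finset.sum_congr rfl fun i _ => heq i
        _ ≤ K := hS
  have hexpT : ∀ i, Real.exp (-(T i)) ≤ 1 := by
    intro i
    rw [Real.exp_le_one_iff]
    linarith [hT i]
  have hSle : ∀ c, (∑ i, X c i) ≤ K := by
    intro c
    induction c with
    | zero => exact hsum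
    | succ c ih =>
      calc (∑ i, X (c + 1) i)
          ≤ ∑ i, g c i := by
            apply Finset.sum_le_sum
            intro i _
            rw [hstep' c i]
            calc g c i * Real.exp (-(T i)) ≤ g c i * 1 :=
                  mul_le_mul_of_nonneg_left (hexpT i) (hgnn c i)
              _ = g c i := mul_one _
        _ ≤ K := hSG c ih
  have hGle : ∀ c, (∑ i, g c i) ≤ K := fun c => hSG c (hSle c)
  have hXg : ∀ c i, X (c + 1) i ≤ g c i := by
    intro c i
    rw [hstep' c i]
    calc g c i * Real.exp (-(T i)) ≤ g c i * 1 :=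
          mul_le_mul_of_nonneg_left (hexpT i) (hgnn c i)
      _ = g c i := mul_one _
  have hinact : ∀ c i, X c i < Xe → X (c + 1) i < Xe := by
    intro c i h
    have hIe : Ie Xe (X c i) = 0 := if_neg (not_le.2 h)
    have hgX : g c i = X c i := by
      rw [hgdef]; simp only []; rw [hIe, mul_zero, Real.exp_zero, mul_one]
    calc X (c + 1) i ≤ g c i := hXg c i
      _ = X c i := hgX
      _ < Xe := h
  -- key lemma: the saturation time dominates the minimal equilibrium time
  have hkey : ∀ c j, 1 ≤ c → Xe ≤ X c j → (∀ i, Xe ≤ X c i → τ j ≤ τ i) → τ j ≤ tsat c := by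
    intro c j hc1 hj hmin
    obtain ⟨c', rfl⟩ : ∃ c', c = c' + 1 := ⟨c - 1, (Nat.succ_pred_eq_of_pos hc1).symm⟩
    by_contra hlt
    push_neg at hlt
    have hA : ∃ i, Xe ≤ X (c' + 1) i := ⟨j, hj⟩
    have hKeq : (∑ i, X (c' + 1) i * Real.exp (μ i * tsat (c' + 1) * Ie Xe (X (c' + 1) i))) = K :=
      htsat (c' + 1) hA
    have hFτ : (∑ i, X (c' + 1) i * Real.exp (μ i * τ j * Ie Xe (X (c' + 1) i))) ≤ K := by
      have hterm : ∀ i, X (c' + 1) i * Real.exp (μ i * τ j * Ie Xe (X (c' + 1) i)) ≤ g c' i := by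
        intro i
        by_cases hi : Xe ≤ X (c' + 1) i
        · have hIe1 : Ie Xe (X (c' + 1) i) = 1 := if_pos hi
          rw [hIe1, mul_one]
          calc X (c' + 1) i * Real.exp (μ i * τ j)
              ≤ X (c' + 1) i * Real.exp (μ i * τ i) := by
                apply mul_le_mul_of_nonneg_left _ (hXnn _ i)
                exact Real.exp_le_exp.2 (mul_le_mul_of_nonneg_left (hmin i hi) (hμ i).le)
            _ = X (c' + 1) i * Real.exp (T i) := by rw [hμτ i]
            _ = g c' i := hpot c' i
        · have hIe0 : Ie Xe (X (c' + 1) i) = 0 := if_neg hi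
          rw [hIe0, mul_zero, Real.exp_zero, mul_one]
          have h1 := hpot c' i
          have h2 : (1 : ℝ) ≤ Real.exp (T i) := Real.one_le_exp (hT i).le
          nlinarith [hXnn (c' + 1) i]
      calc (∑ i, X (c' + 1) i * Real.exp (μ i * τ j * Ie Xe (X (c' + 1) i)))
          ≤ ∑ i, g c' i := Finset.sum_le_sum fun i _ => hterm i
        _ ≤ K := hGle c'
    have hstrict : (∑ i, X (c' + 1) i * Real.exp (μ i * tsat (c' + 1) * Ie Xe (X (c' + 1) i)))
        < ∑ i, X (c' + 1) i * Real.exp (μ i * τ j * Ie Xe (X (c' + 1) i)) := by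
      apply Finset.sum_lt_sum
      · intro i _
        exact hterm_mono (c' + 1) (tsat (c' + 1)) (τ j) hlt.le i
      · refine ⟨j, Finset.mem_univ j, ?_⟩
        have hIe1 : Ie Xe (X (c' + 1) j) = 1 := if_pos hj
        rw [hIe1, mul_one, mul_one]
        have h0 : 0 < X (c' + 1) j := lt_of_lt_of_le hXe hj
        exact mul_lt_mul_of_pos_left
          (Real.exp_lt_exp.2 (mul_lt_mul_of_pos_left hlt (hμ j))) h0
    rw [hKeq] at hstrict
    linarith
  -- eternal strain: a minimal strain with τ j ≤ tg never goes below Xe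
  have heternal : ∀ c0 j, 1 ≤ c0 → Xe ≤ X c0 j →
      (∀ i, Xe ≤ X c0 i → τ j ≤ τ i) → τ j ≤ tg → False := by
    intro c0 j hc0 hj hmin hτg
    have hall : ∀ d, Xe ≤ X (c0 + d) j ∧ ∀ i, Xe ≤ X (c0 + d) i → τ j ≤ τ i := by
      intro d
      induction d with
      | zero => exact ⟨hj, hmin⟩
      | succ d ih =>
        obtain ⟨h1, h2⟩ := ih
        have hc1 : 1 ≤ c0 + d := le_trans hc0 (Nat.le_add_right _ _)
        have hA : ∃ i, Xe ≤ X (c0 + d) i := ⟨j, h1⟩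
        have htsge : τ j ≤ tsat (c0 + d) := hkey _ j hc1 h1 h2
        have htdge : τ j ≤ td (c0 + d) := by
          rw [htdif, if_pos hA]; exact le_min hτg htsge
        have hIe1 : Ie Xe (X (c0 + d) j) = 1 := if_pos h1
        have hXj : X (c0 + d) j ≤ X (c0 + d + 1) j := by
          rw [hstep' (c0 + d) j]
          have hgj : g (c0 + d) j = X (c0 + d) j * Real.exp (μ j * td (c0 + d)) := by
            rw [hgdef]; simp only []; rw [hIe1, mul_one]
          rw [hgj, mul_assoc, ← Real.exp_add]
          have hexp : 1 ≤ Real.exp (μ j * td (c0 + d) + -(T j)) := by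
            apply Real.one_le_exp
            have h3 : μ j * τ j ≤ μ j * td (c0 + d) :=
              mul_le_mul_of_nonneg_left htdge (hμ j).le
            rw [hμτ j] at h3
            linarith
          nlinarith [hXnn (c0 + d) j]
        refine ⟨le_trans h1 hXj, ?_⟩
        intro i hi
        by_cases h : Xe ≤ X (c0 + d) i
        · exact h2 i h
        · exact absurd hi (not_le.2 (hinact _ i (not_le.1 h)))
    have hev : ∀ᶠ c in Filter.atTop, X c j < Xe :=
      (hext j).eventually_lt_const hXe
    obtain ⟨N, hN⟩ := Filter.eventually_atTop.1 hev
    exact absurd (hall N).1 (not_le.2 (hN (c0 + N) (Nat.le_add_left _ _)))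
  -- main argument
  intro c hc
  show td c = tg
  by_cases hA : ∃ i, Xe ≤ X c i
  · have hsne : (Finset.univ.filter fun i => Xe ≤ X c i).Nonempty := by
      obtain ⟨i, hi⟩ := hA
      exact ⟨i, Finset.mem_filter.2 ⟨Finset.mem_univ i, hi⟩⟩
    obtain ⟨j, hjs, hjmin⟩ := Finset.exists_min_image _ τ hsne
    have hj : Xe ≤ X c j := (Finset.mem_filter.1 hjs).2
    have hmin : ∀ i, Xe ≤ X c i → τ j ≤ τ i := fun i hi =>
      hjmin i (Finset.mem_filter.2 ⟨Finset.mem_univ i, hi⟩)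
    by_cases hτg : τ j ≤ tg
    · exact absurd (heternal c j hc hj hmin hτg) id
    · have h1 : tg ≤ tsat c := le_trans (not_le.1 hτg).le (hkey c j hc hj hmin)
      rw [htdif, if_pos hA, min_eq_left h1]
  · rw [htdif, if_neg hA]
end

section
/- In the cyclic-treatment model, if strain i survives (i.e., X_i(t_c^f) converges to a positive limit as c → ∞), then t_eq,i ≤ t_c for every cycle c > 1, where t_eq,i = (k_i t_k − log D)/μ_i is the equilibrium time of strain i. -/
open scoped Classical

/-- Corollary 2, part 2 of the paper: if strain `i` survives, its
equilibrium time bounds the growth duration from below for every paper cycle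
`c > 1` (here index `c ≥ 1`). -/
theorem stmt13 (n : ℕ) (hn : 0 < n) (μ k : Fin n → ℝ) (tg tk D Xe K : ℝ)
    (Xinit : Fin n → ℝ) (tsat : ℕ → ℝ)
    (hμ : ∀ i, 0 < μ i) (hk : ∀ i, 0 ≤ k i) (htg : 0 < tg) (htk : 0 < tk)
    (hD0 : 0 < D) (hD1 : D < 1) (hXe : 0 < Xe) (hXeK : Xe < K)
    (hXinit : ∀ i, 0 ≤ Xinit i) (hsum : ∑ i, Xinit i ≤ K)
    (htsat : ∀ c, (∃ j, Xe ≤ X0 μ k tg tk D Xe Xinit tsat c j) →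
      ∑ i, X0 μ k tg tk D Xe Xinit tsat c i *
        Real.exp (μ i * tsat c * Ie Xe (X0 μ k tg tk D Xe Xinit tsat c i)) = K)
    (i : Fin n)
    (hsurv : ∃ L, 0 < L ∧
      Filter.Tendsto (fun c => X0 μ k tg tk D Xe Xinit tsat c i) Filter.atTop (nhds L)) :
    ∀ c, 1 ≤ c → teq (k i) tk D (μ i) ≤ tdur μ k tg tk D Xe Xinit tsat c := by
  obtain ⟨L, hL0, hL⟩ := hsurv
  set X : ℕ → Fin n → ℝ := X0 μ k tg tk D Xe Xinit tsat with hXdef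
  set T : ℕ → ℝ := tdur μ k tg tk D Xe Xinit tsat with hTdef
  have hsucc : ∀ c j, X (c+1) j = D * X c j * Real.exp (μ j * T c * Ie Xe (X c j) - k j * tk) :=
    fun c j => rfl
  have hTite : ∀ c, T c = if ∃ j, Xe ≤ X c j then min tg (tsat c) else tg := fun c => rfl
  have hKpos : 0 < K := lt_trans hXe hXeK
  -- nonnegativity
  have hpos : ∀ c j, 0 ≤ X c j := by
    intro c
    induction c with
    | zero => exact hXinit
    | succ c ih =>
      intro j
      rw [hsucc]
      exact mul_nonneg (mul_nonneg hD0.le (ih j)) (Real.exp_pos _).le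
  have hIe0 : ∀ x, ¬ Xe ≤ x → Ie Xe x = 0 := fun x h => if_neg h
  have hIe1 : ∀ x, Xe ≤ x → Ie Xe x = 1 := fun x h => if_pos h
  have hIenn : ∀ x, 0 ≤ Ie Xe x := by
    intro x; unfold Ie; split <;> norm_num
  have hktk : ∀ j, (0:ℝ) ≤ k j * tk := fun j => mul_nonneg (hk j) htk.le
  -- one dead step
  have hdead : ∀ c j, X c j < Xe → X (c+1) j ≤ D * X c j ∧ X (c+1) j < Xe := by
    intro c j hlt
    have hx : X (c+1) j = D * X c j * Real.exp (0 - k j * tk) := by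
      rw [hsucc, hIe0 _ (not_le.mpr hlt)]; ring_nf
    have hexp : Real.exp (0 - k j * tk) ≤ 1 := by
      rw [Real.exp_le_one_iff]; linarith [hktk j]
    have h1 : X (c+1) j ≤ D * X c j := by
      rw [hx]
      nlinarith [hpos c j, mul_nonneg hD0.le (hpos c j), Real.exp_pos (0 - k j * tk)]
    refine ⟨h1, ?_⟩
    have h2 : D * X c j ≤ X c j := mul_le_of_le_one_left (hpos c j) hD1.le
    linarith
  -- a strain below the extinction limit decays geometrically and stays below
  have hdecay : ∀ j c, X c j < Xe → ∀ m, X (c+m) j ≤ D^m * X c j ∧ X (c+m) j < Xe := by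
    intro j c h0 m
    induction m with
    | zero =>
      refine ⟨?_, ?_⟩
      · show X (c+0) j ≤ D^0 * X c j
        simp
      · show X (c+0) j < Xe
        simpa using h0
    | succ m ih =>
      obtain ⟨hle, hlt⟩ := ih
      obtain ⟨h1, h2⟩ := hdead (c+m) j hlt
      refine ⟨?_, h2⟩
      show X (c+m+1) j ≤ D^(m+1) * X c j
      calc X (c+m+1) j ≤ D * X (c+m) j := h1
        _ ≤ D * (D^m * X c j) := mul_le_mul_of_nonneg_left hle hD0.le
        _ = D^(m+1) * X c j := by ring
  -- strain i stays above the extinction limit forever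
  have hAlive : ∀ c, Xe ≤ X c i := by
    intro c
    by_contra h
    push_neg at h
    have h2 : Filter.Tendsto (fun m => X (c+m) i) Filter.atTop (nhds L) := by
      have := hL.comp (Filter.tendsto_add_atTop_nat c)
      convert this using 2 with m
      simp [Nat.add_comm]
    have h3 : Filter.Tendsto (fun m => X (c+m) i) Filter.atTop (nhds 0) := by
      apply squeeze_zero (fun m => hpos (c+m) i) (fun m => (hdecay i c h m).1)
      have := (tendsto_pow_atTop_nhds_zero_of_lt_one hD0.le hD1).mul_const (X c i)
      simpa using this
    exact absurd (tendsto_nhds_unique h2 h3) (ne_of_gt hL0)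
  have hEx : ∀ c, ∃ j, Xe ≤ X c j := fun c => ⟨i, hAlive c⟩
  have hTmin : ∀ c, T c = min tg (tsat c) := fun c => by rw [hTite c, if_pos (hEx c)]
  have hTle : ∀ c, T c ≤ tg := fun c => by rw [hTmin c]; exact min_le_left _ _
  have hTts : ∀ c, T c ≤ tsat c := fun c => by rw [hTmin c]; exact min_le_right _ _
  have hK : ∀ c, ∑ j, X c j * Real.exp (μ j * tsat c * Ie Xe (X c j)) = K :=
    fun c => htsat c (hEx c)
  -- basic recurrence for alive strains
  have hrec : ∀ c j, Xe ≤ X c j →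
      X (c+1) j = X c j * Real.exp (μ j * (T c - teq (k j) tk D (μ j))) := by
    intro c j hj
    rw [hsucc, hIe1 _ hj]
    have hμj := (hμ j).ne'
    have harg : μ j * (T c - teq (k j) tk D (μ j)) = (μ j * T c * 1 - k j * tk) + Real.log D := by
      unfold teq; field_simp; ring
    rw [harg, Real.exp_add, Real.exp_log hD0]
    ring
  -- capacity bound
  have hStar : ∀ c j, X (c+1) j * Real.exp (μ j * teq (k j) tk D (μ j)) ≤ K := by
    intro c j
    have hμj := (hμ j).ne'
    have harg : μ j * teq (k j) tk D (μ j) = k j * tk - Real.log D := by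
      unfold teq; field_simp
    have h1 : X (c+1) j * Real.exp (μ j * teq (k j) tk D (μ j))
        = X c j * Real.exp (μ j * T c * Ie Xe (X c j)) := by
      rw [hsucc, harg, mul_assoc, ← Real.exp_add]
      have h2 : μ j * T c * Ie Xe (X c j) - k j * tk + (k j * tk - Real.log D)
          = μ j * T c * Ie Xe (X c j) + (- Real.log D) := by ring
      rw [h2, Real.exp_add, Real.exp_neg, Real.exp_log hD0]
      field_simp
    rw [h1]
    calc X c j * Real.exp (μ j * T c * Ie Xe (X c j))
        ≤ X c j * Real.exp (μ j * tsat c * Ie Xe (X c j)) := by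
          apply mul_le_mul_of_nonneg_left _ (hpos c j)
          apply Real.exp_le_exp.mpr
          exact mul_le_mul_of_nonneg_right
            (mul_le_mul_of_nonneg_left (hTts c) (hμ j).le) (hIenn _)
      _ ≤ ∑ j', X c j' * Real.exp (μ j' * tsat c * Ie Xe (X c j')) :=
          Finset.single_le_sum
            (f := fun j' => X c j' * Real.exp (μ j' * tsat c * Ie Xe (X c j')))
            (fun j' _ => mul_nonneg (hpos c j') (Real.exp_pos _).le) (Finset.mem_univ j)
      _ = K := hK c
  -- witness lemma
  have hWitness : ∀ c, ∃ j, Xe ≤ X (c+1) j ∧ teq (k j) tk D (μ j) ≤ tsat (c+1) := by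
    intro c
    by_contra hcon
    push_neg at hcon
    have hgnn : ∀ j, (0:ℝ) ≤ X c j * Real.exp (μ j * tsat c * Ie Xe (X c j)) :=
      fun j => mul_nonneg (hpos c j) (Real.exp_pos _).le
    have hclaim : ∀ j, 0 < X c j →
        X (c+1) j * Real.exp (μ j * tsat (c+1) * Ie Xe (X (c+1) j))
          < X c j * Real.exp (μ j * tsat c * Ie Xe (X c j)) := by
      intro j hxj
      have hμj := (hμ j).ne'
      by_cases hal : Xe ≤ X (c+1) j
      · have halc : Xe ≤ X c j := by
          by_contra hnot
          push_neg at hnot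
          have := (hdead c j hnot).2
          linarith
        have hts1 := hcon j hal
        rw [hIe1 _ hal, hIe1 _ halc, hsucc, hIe1 _ halc, mul_one, mul_one, mul_one]
        have hLHS : D * X c j * Real.exp (μ j * T c - k j * tk) * Real.exp (μ j * tsat (c+1))
            = X c j * Real.exp (μ j * T c - k j * tk + Real.log D + μ j * tsat (c+1)) := by
          rw [Real.exp_add, Real.exp_add, Real.exp_log hD0]
          ring
        rw [hLHS]
        apply mul_lt_mul_of_pos_left _ hxj
        apply Real.exp_lt_exp.mpr
        have h1 : μ j * T c ≤ μ j * tsat c := mul_le_mul_of_nonneg_left (hTts c) (hμ j).le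
        have h2 : μ j * tsat (c+1) < μ j * teq (k j) tk D (μ j) :=
          mul_lt_mul_of_pos_left hts1 (hμ j)
        have h3 : μ j * teq (k j) tk D (μ j) = k j * tk - Real.log D := by
          unfold teq; field_simp
        linarith
      · rw [hIe0 _ hal, mul_zero, Real.exp_zero, mul_one, hsucc]
        have hgj : 0 < X c j * Real.exp (μ j * tsat c * Ie Xe (X c j)) :=
          mul_pos hxj (Real.exp_pos _)
        have hexp : Real.exp (μ j * T c * Ie Xe (X c j) - k j * tk)
            ≤ Real.exp (μ j * tsat c * Ie Xe (X c j)) := by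
          apply Real.exp_le_exp.mpr
          have h1 : μ j * T c * Ie Xe (X c j) ≤ μ j * tsat c * Ie Xe (X c j) :=
            mul_le_mul_of_nonneg_right
              (mul_le_mul_of_nonneg_left (hTts c) (hμ j).le) (hIenn _)
          linarith [hktk j]
        calc D * X c j * Real.exp (μ j * T c * Ie Xe (X c j) - k j * tk)
            ≤ D * (X c j * Real.exp (μ j * tsat c * Ie Xe (X c j))) := by
              rw [mul_assoc]
              exact mul_le_mul_of_nonneg_left
                (mul_le_mul_of_nonneg_left hexp hxj.le) hD0.le
          _ < X c j * Real.exp (μ j * tsat c * Ie Xe (X c j)) := by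
              nlinarith [hgj, mul_pos (show (0:ℝ) < 1 - D by linarith) hgj]
    have hweak : ∀ j ∈ Finset.univ,
        X (c+1) j * Real.exp (μ j * tsat (c+1) * Ie Xe (X (c+1) j))
          ≤ X c j * Real.exp (μ j * tsat c * Ie Xe (X c j)) := by
      intro j _
      rcases lt_or_eq_of_le (hpos c j) with hx | hx
      · exact (hclaim j hx).le
      · have hx1 : X (c+1) j = 0 := by rw [hsucc, ← hx, mul_zero, zero_mul]
        rw [hx1, zero_mul]
        exact hgnn j
    have hstrict : ∃ j ∈ Finset.univ,
        X (c+1) j * Real.exp (μ j * tsat (c+1) * Ie Xe (X (c+1) j))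
          < X c j * Real.exp (μ j * tsat c * Ie Xe (X c j)) := by
      have hex : ∃ j, 0 < X c j := by
        by_contra hno
        push_neg at hno
        have hz : ∀ j, X c j = 0 := fun j => le_antisymm (hno j) (hpos c j)
        have hK0 : K = 0 := by
          rw [← hK c]
          apply Finset.sum_eq_zero
          intro j _
          rw [hz j, zero_mul]
        linarith
      obtain ⟨j, hj⟩ := hex
      exact ⟨j, Finset.mem_univ j, hclaim j hj⟩
    have hlt : ∑ j, X (c+1) j * Real.exp (μ j * tsat (c+1) * Ie Xe (X (c+1) j))
        < ∑ j, X c j * Real.exp (μ j * tsat c * Ie Xe (X c j)) :=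
      Finset.sum_lt_sum hweak hstrict
    rw [hK c, hK (c+1)] at hlt
    exact lt_irrefl K hlt
  -- partial sums of (T c - teq i)
  set tq : ℝ := teq (k i) tk D (μ i) with htqdef
  set S : ℕ → ℝ := fun N => ∑ c ∈ Finset.range N, (T c - tq) with hSdef
  have hXN : ∀ N, X N i = X 0 i * Real.exp (μ i * S N) := by
    intro N
    induction N with
    | zero => simp [hSdef]
    | succ N ih =>
      rw [hrec N i (hAlive N), ih, hSdef]
      simp only [Finset.sum_range_succ]
      rw [mul_assoc, ← Real.exp_add, mul_add]
  have hX0pos : 0 < X 0 i := lt_of_lt_of_le hXe (hAlive 0)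
  -- convergence of μ i * S N
  have hSconv : Filter.Tendsto (fun N => μ i * S N) Filter.atTop
      (nhds (Real.log (L / X 0 i))) := by
    have h1 : Filter.Tendsto (fun N => X N i / X 0 i) Filter.atTop (nhds (L / X 0 i)) :=
      hL.div_const _
    have h2 : Filter.Tendsto (fun N => Real.log (X N i / X 0 i)) Filter.atTop
        (nhds (Real.log (L / X 0 i))) :=
      (Real.continuousAt_log (by positivity : L / X 0 i ≠ 0)).tendsto.comp h1
    have h3 : (fun N => μ i * S N) = fun N => Real.log (X N i / X 0 i) := by
      funext N
      rw [hXN N, mul_comm (X 0 i) _, mul_div_assoc, div_self hX0pos.ne', mul_one, Real.log_exp]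
    rw [h3]
    exact h2
  obtain ⟨b, hb⟩ := hSconv.bddBelow_range
  have hbS : ∀ N, b ≤ μ i * S N := fun N => hb (Set.mem_range_self N)
  have hSlow : ∀ N, b / μ i ≤ S N := by
    intro N
    rw [div_le_iff₀ (hμ i)]
    calc b ≤ μ i * S N := hbS N
      _ = S N * μ i := by ring
  -- no strain with smaller teq stays alive forever
  have hNoForever : ∀ c0 j, teq (k j) tk D (μ j) < tq → ¬ (∀ N, Xe ≤ X (c0 + N) j) := by
    intro c0 j hjlt halive
    set tj : ℝ := teq (k j) tk D (μ j) with htjdef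
    have hδ : 0 < tq - tj := by linarith
    have hXj : ∀ N, X (c0 + N) j
        = X c0 j * Real.exp (μ j * ((S (c0 + N) - S c0) + (N:ℝ) * (tq - tj))) := by
      intro N
      induction N with
      | zero =>
        show X (c0 + 0) j = X c0 j * Real.exp (μ j * ((S (c0 + 0) - S c0) + (0:ℕ) * (tq - tj)))
        simp [Real.exp_zero]
      | succ N ih =>
        have hstep : X (c0 + (N + 1)) j
            = X (c0 + N) j * Real.exp (μ j * (T (c0 + N) - tj)) := hrec (c0 + N) j (halive N)
        rw [hstep, ih, mul_assoc, ← Real.exp_add]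
        congr 1
        have hSstep : S (c0 + N + 1) = S (c0 + N) + (T (c0 + N) - tq) := by
          rw [hSdef]; simp [Finset.sum_range_succ]; ring
        have hSS : S (c0 + (N+1)) = S (c0 + N) + (T (c0 + N) - tq) := hSstep
        rw [hSS]
        push_cast
        ring
    obtain ⟨N, hN⟩ := exists_nat_gt
      ((Real.log (K / Xe) / μ j - ((b / μ i - S c0) + tj)) / (tq - tj))
    have hN' : Real.log (K / Xe) / μ j - ((b / μ i - S c0) + tj) < (N:ℝ) * (tq - tj) := by
      rw [div_lt_iff₀ hδ] at hN
      linarith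
    have hXjN : X (c0 + N + 1) j
        = X c0 j * Real.exp (μ j * ((S (c0 + N + 1) - S c0) + ((N:ℝ) + 1) * (tq - tj))) := by
      have h := hXj (N + 1)
      push_cast at h
      exact h
    have hElow : Real.log (K / Xe) / μ j
        < ((S (c0 + N + 1) - S c0) + ((N:ℝ) + 1) * (tq - tj)) + tj := by
      have h1 : b / μ i ≤ S (c0 + N + 1) := hSlow _
      have h2 : ((N:ℝ) + 1) * (tq - tj) = (N:ℝ) * (tq - tj) + (tq - tj) := by ring
      linarith
    have hlogK : Real.log (K / Xe)
        < μ j * (((S (c0 + N + 1) - S c0) + ((N:ℝ) + 1) * (tq - tj)) + tj) := by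
      rw [div_lt_iff₀ (hμ j)] at hElow
      linarith
    have hXc0 : Xe ≤ X c0 j := by simpa using halive 0
    have hcontra : K < X (c0 + N + 1) j * Real.exp (μ j * tj) := by
      rw [hXjN, mul_assoc, ← Real.exp_add, ← mul_add]
      calc K = Xe * (K / Xe) := by field_simp
        _ < Xe * Real.exp (μ j * (((S (c0 + N + 1) - S c0) + ((N:ℝ) + 1) * (tq - tj)) + tj)) := by
            apply mul_lt_mul_of_pos_left _ hXe
            rw [← Real.exp_log (by positivity : (0:ℝ) < K / Xe)]
            exact Real.exp_lt_exp.mpr hlogK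
        _ ≤ X c0 j * Real.exp (μ j * (((S (c0 + N + 1) - S c0) + ((N:ℝ) + 1) * (tq - tj)) + tj)) :=
            mul_le_mul_of_nonneg_right hXc0 (Real.exp_pos _).le
    have hbound : X (c0 + N + 1) j * Real.exp (μ j * tj) ≤ K := hStar (c0 + N) j
    linarith
  -- finite descent
  have hkey : tq ≤ tg → ∀ m : ℕ, ∀ c : ℕ, 1 ≤ c → tsat c < tq →
      (Finset.univ.filter (fun j => teq (k j) tk D (μ j) ≤ tsat c)).card ≤ m → False := by
    intro htgq m
    induction m with
    | zero =>
      intro c hc hbad hcard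
      obtain ⟨c', rfl⟩ : ∃ c', c = c' + 1 := ⟨c - 1, (Nat.succ_pred_eq_of_pos hc).symm⟩
      obtain ⟨j0, _, hj0le⟩ := hWitness c'
      have hmem : j0 ∈ Finset.univ.filter (fun j => teq (k j) tk D (μ j) ≤ tsat (c'+1)) := by
        simp only [Finset.mem_filter, Finset.mem_univ, true_and]
        exact hj0le
      have := Finset.card_pos.mpr ⟨j0, hmem⟩
      omega
    | succ m ih =>
      intro c hc hbad hcard
      obtain ⟨c', rfl⟩ : ∃ c', c = c' + 1 := ⟨c - 1, (Nat.succ_pred_eq_of_pos hc).symm⟩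
      obtain ⟨j0, hj0alive, hj0le⟩ := hWitness c'
      have hj0lt : teq (k j0) tk D (μ j0) < tq := lt_of_le_of_lt hj0le hbad
      have hnof := hNoForever (c'+1) j0 hj0lt
      push_neg at hnof
      obtain ⟨N0, hN0⟩ := hnof
      have hPex : ∃ N, X (c'+1+N) j0 < Xe := ⟨N0, hN0⟩
      have hdpos : Nat.find hPex ≠ 0 := by
        intro h0
        have := Nat.find_spec hPex
        rw [h0] at this
        simp only [Nat.add_zero] at this
        linarith
      obtain ⟨d', hd'⟩ : ∃ d', Nat.find hPex = d' + 1 :=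
        ⟨Nat.find hPex - 1, (Nat.succ_pred_eq_of_pos (Nat.pos_of_ne_zero hdpos)).symm⟩
      have hd : X (c'+1+(d'+1)) j0 < Xe := by
        rw [← hd']
        exact Nat.find_spec hPex
      have hd'alive : Xe ≤ X (c'+1+d') j0 := by
        by_contra hno
        push_neg at hno
        exact absurd hno (Nat.find_min hPex (by omega))
      have hstep : X (c'+1+d'+1) j0
          = X (c'+1+d') j0 * Real.exp (μ j0 * (T (c'+1+d') - teq (k j0) tk D (μ j0))) :=
        hrec (c'+1+d') j0 hd'alive
      have hMd : X (c'+1+d'+1) j0 < Xe := hd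
      have hXM0 : 0 < X (c'+1+d') j0 := lt_of_lt_of_le hXe hd'alive
      have hexplt : Real.exp (μ j0 * (T (c'+1+d') - teq (k j0) tk D (μ j0))) < 1 := by
        by_contra hge
        push_neg at hge
        have h5 : X (c'+1+d') j0 * 1
            ≤ X (c'+1+d') j0 * Real.exp (μ j0 * (T (c'+1+d') - teq (k j0) tk D (μ j0))) :=
          mul_le_mul_of_nonneg_left hge hXM0.le
        rw [mul_one] at h5
        rw [hstep] at hMd
        linarith
      have hTMlt : T (c'+1+d') < teq (k j0) tk D (μ j0) := by
        have h := Real.exp_lt_one_iff.mp hexplt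
        nlinarith [hμ j0]
      have htsatM : tsat (c'+1+d') < teq (k j0) tk D (μ j0) := by
        by_contra hge
        push_neg at hge
        have htj0tg : teq (k j0) tk D (μ j0) ≤ tg := le_trans hj0lt.le htgq
        have : teq (k j0) tk D (μ j0) ≤ T (c'+1+d') := by
          rw [hTmin]
          exact le_min htj0tg hge
        linarith
      have hbadM : tsat (c'+1+d') < tq := lt_trans htsatM hj0lt
      have hsub : Finset.univ.filter (fun j => teq (k j) tk D (μ j) ≤ tsat (c'+1+d'))
          ⊆ (Finset.univ.filter (fun j => teq (k j) tk D (μ j) ≤ tsat (c'+1))).erase j0 := by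
        intro j hj
        simp only [Finset.mem_filter, Finset.mem_univ, true_and] at hj
        apply Finset.mem_erase.mpr
        constructor
        · intro heq
          rw [heq] at hj
          linarith
        · simp only [Finset.mem_filter, Finset.mem_univ, true_and]
          linarith
      have hcardM :
          (Finset.univ.filter (fun j => teq (k j) tk D (μ j) ≤ tsat (c'+1+d'))).card ≤ m := by
        have h1 := Finset.card_le_card hsub
        have hj0mem : j0 ∈ Finset.univ.filter
            (fun j => teq (k j) tk D (μ j) ≤ tsat (c'+1)) := by
          simp only [Finset.mem_filter, Finset.mem_univ, true_and]
          exact hj0le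
        have h2 := Finset.card_erase_of_mem hj0mem
        omega
      exact ih (c'+1+d') (by omega) hbadM hcardM
  -- conclusion
  intro c hc
  by_contra hlt
  push_neg at hlt
  by_cases htgq : tq ≤ tg
  · have hbad : tsat c < tq := by
      by_contra hge
      push_neg at hge
      have : tq ≤ T c := by
        rw [hTmin]
        exact le_min htgq hge
      linarith
    exact hkey htgq n c hc hbad (le_trans (Finset.card_filter_le _ _) (by simp))
  · push_neg at htgq
    have hr1 : Real.exp (μ i * (tg - tq)) < 1 := by
      rw [Real.exp_lt_one_iff]
      nlinarith [hμ i]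
    have hr0 : (0:ℝ) < Real.exp (μ i * (tg - tq)) := Real.exp_pos _
    have hgeo : ∀ m, X m i ≤ (Real.exp (μ i * (tg - tq)))^m * X 0 i := by
      intro m
      induction m with
      | zero => simp
      | succ m ih =>
        rw [hrec m i (hAlive m)]
        have hex : Real.exp (μ i * (T m - tq)) ≤ Real.exp (μ i * (tg - tq)) := by
          apply Real.exp_le_exp.mpr
          exact mul_le_mul_of_nonneg_left (by linarith [hTle m]) (hμ i).le
        calc X m i * Real.exp (μ i * (T m - tq))
            ≤ ((Real.exp (μ i * (tg - tq)))^m * X 0 i) * Real.exp (μ i * (tg - tq)) := by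
              apply mul_le_mul ih hex (Real.exp_pos _).le
              positivity
          _ = (Real.exp (μ i * (tg - tq)))^(m+1) * X 0 i := by ring
    have h3 : Filter.Tendsto (fun m => X m i) Filter.atTop (nhds 0) := by
      apply squeeze_zero (fun m => hpos m i) hgeo
      have := (tendsto_pow_atTop_nhds_zero_of_lt_one hr0.le hr1).mul_const (X 0 i)
      simpa using this
    exact absurd (tendsto_nhds_unique hL h3) (ne_of_gt hL0)
end
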